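/- arXiv:1812.04531 — 2 statements merged into one kernel-verified Lean document; each statement's English description precedes it below -/
import Mathlib

section
/- Let k and n be positive integers and let d_1, d_2 ∈ A_k. If the bottom row of d_1 does not match the top row of d_2, then φ_k(x_{d_2}) ∘ φ_k(x_{d_1}) = 0. If the bottom row of d_1 matches the top row of d_2, then φ_k(x_{d_2}) ∘ φ_k(x_{d_1}) = Σ_d (n − |d|)_{[d_1∘d_2]} · φ_k(x_d), where the sum runs over all set partitions d obtained from d_1 ∘ d_2 by choosing an injective (possibly empty) partial matching between the blocks of d_1 contained entirely in {1,…,k} and the blocks of d_2 contained entirely in {1′,…,k′} and merging each matched pair into a single block. -/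
open scoped Classical
open Matrix

noncomputable section

namespace Tanabe

/-! ## Tensor space model of `V^{⊗k}` for `V = ℂ^n`.
A tensor is encoded by its coordinates, i.e. a function `(Fin k → Fin n) → ℂ`;
the basis vector `v_{i_1} ⊗ ⋯ ⊗ v_{i_k}` corresponds to the indicator function
of the tuple `(i_1, …, i_k)`. -/

abbrev TP (n k : ℕ) : Type := (Fin k → Fin n) → ℂ

/-- The linear endomorphism of `V^{⊗k}` with matrix `K` in the standard basis:
it sends the basis vector indexed by the tuple `i` to `∑ₒ K o i • (basis vector o)`. -/
def kernelMap (n k : ℕ) (K : (Fin k → Fin n) → (Fin k → Fin n) → ℂ) :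
    TP n k →ₗ[ℂ] TP n k where
  toFun f := fun o => ∑ i : Fin k → Fin n, K o i * f i
  map_add' f g := by
    funext o
    simp only [Pi.add_apply, mul_add]
    exact Finset.sum_add_distrib
  map_smul' c f := by
    funext o
    simp only [Pi.smul_apply, smul_eq_mul, RingHom.id_apply]
    rw [Finset.mul_sum]
    exact Finset.sum_congr rfl fun i _ => by ring

/-- The diagonal (tensor-power) action `g^{⊗k}` of a matrix `g` on `V^{⊗k}`. -/
def tensorPow (n k : ℕ) (g : Matrix (Fin n) (Fin n) ℂ) : TP n k →ₗ[ℂ] TP n k :=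
  kernelMap n k fun o i => ∏ t : Fin k, g (o t) (i t)

/-! ## Set partitions of `{1,…,t,1′,…,t′}`.
A set partition of `{1,…,t,1′,…,t′}` is encoded as a `Setoid` on `Fin t ⊕ Fin t`,
with `Sum.inl` the unprimed (top row) elements and `Sum.inr` the primed (bottom row)
elements; blocks are the equivalence classes. -/

abbrev SP (t : ℕ) : Type := Setoid (Fin t ⊕ Fin t)

/-- `N(B)`: number of top-row (unprimed) elements in the block `q` of `d`. -/
def topCt {t : ℕ} (d : SP t) (q : Quotient d) : ℕ :=
  Nat.card {a : Fin t // Quotient.mk d (Sum.inl a) = q}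

/-- `M(B)`: number of bottom-row (primed) elements in the block `q` of `d`. -/
def botCt {t : ℕ} (d : SP t) (q : Quotient d) : ℕ :=
  Nat.card {a : Fin t // Quotient.mk d (Sum.inr a) = q}

/-- `|d|`: the number of blocks of `d`. -/
def nBlocks {t : ℕ} (d : SP t) : ℕ := Nat.card (Quotient d)

/-- Coefficient of `φ_t(x_d)`: equals `1` if the equalities among the values of the
combined tuple `c` are *exactly* those prescribed by `d`, and `0` otherwise. -/
def coeX (n t : ℕ) (d : SP t) (c : Fin t ⊕ Fin t → Fin n) : ℂ :=
  if ∀ a b : Fin t ⊕ Fin t, d.r a b ↔ c a = c b then 1 else 0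

/-- Coefficient of `φ_t(d)` (the diagram basis): equals `1` if the values of the
combined tuple `c` agree on each block of `d`, and `0` otherwise. -/
def coeD (n t : ℕ) (d : SP t) (c : Fin t ⊕ Fin t → Fin n) : ℂ :=
  if ∀ a b : Fin t ⊕ Fin t, d.r a b → c a = c b then 1 else 0

/-- The operator `φ_t(x_d)` on `V^{⊗t}`. -/
def phiX (n t : ℕ) (d : SP t) : TP n t →ₗ[ℂ] TP n t :=
  kernelMap n t fun o i => coeX n t d (Sum.elim i o)

/-- The operator `φ_t(d)` on `V^{⊗t}` (diagram basis). -/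
def phiD (n t : ℕ) (d : SP t) : TP n t →ₗ[ℂ] TP n t :=
  kernelMap n t fun o i => coeD n t d (Sum.elim i o)

/-- `d ∈ Π_t(r)` : every block `B` satisfies `N(B) ≡ M(B) (mod r)`. -/
def inPi (r : ℕ) {t : ℕ} (d : SP t) : Prop :=
  ∀ q : Quotient d, (topCt d q : ℤ) ≡ (botCt d q : ℤ) [ZMOD (r : ℤ)]

/-- `d ∈ Λ_t(r,p,n)` (here `m = r/p`). -/
def inLambda (r p n : ℕ) {t : ℕ} (d : SP t) : Prop :=
  nBlocks d = n ∧
  (∀ q : Quotient d,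
    ((topCt d q : ℤ) ≡ (botCt d q : ℤ) [ZMOD ((r / p : ℕ) : ℤ)]) ∧
    ¬ ((topCt d q : ℤ) ≡ (botCt d q : ℤ) [ZMOD (r : ℤ)])) ∧
  (∀ q q' : Quotient d,
    (topCt d q : ℤ) - (botCt d q : ℤ) ≡ (topCt d q' : ℤ) - (botCt d q' : ℤ) [ZMOD (r : ℤ)])

/-- `d ∈ Θ_t(r,p,n)` (here `m = r/p`). -/
def inTheta (r p n : ℕ) {t : ℕ} (d : SP t) : Prop :=
  n < nBlocks d ∧
  (∀ q : Quotient d, (topCt d q : ℤ) ≡ (botCt d q : ℤ) [ZMOD ((r / p : ℕ) : ℤ)]) ∧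
  ∃ q : Quotient d, ¬ ((topCt d q : ℤ) ≡ (botCt d q : ℤ) [ZMOD (r : ℤ)])

/-- `d ∈ A_t(r,p,n) = Π_t(r) ∪ Λ_t(r,p,n) ∪ Θ_t(r,p,n)`. -/
def inA (r p n : ℕ) {t : ℕ} (d : SP t) : Prop :=
  inPi r d ∨ inLambda r p n d ∨ inTheta r p n d

/-- `d ∈ A_{k+1/2}` : `k+1` and `(k+1)′` lie in the same block. -/
def isHalf (k : ℕ) (d : SP (k + 1)) : Prop :=
  d.r (Sum.inl (Fin.last k)) (Sum.inr (Fin.last k))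

/-- `d ∈ Π_t(r,p,n)` : `d ∈ A_t(r,p,n)` with at most `n` blocks. -/
def inPiRPN (r p n : ℕ) {t : ℕ} (d : SP t) : Prop :=
  inA r p n d ∧ nBlocks d ≤ n

/-- `{φ_k(x_d) : d ∈ A_k(r,p,n)}`. -/
def TanSet (r p n k : ℕ) : Set (TP n k →ₗ[ℂ] TP n k) :=
  {T | ∃ d : SP k, inA r p n d ∧ T = phiX n k d}

/-- `{φ_{k+1}(x_d) : d ∈ A_{k+1/2}(r,p,n)}` (as endomorphisms of `V^{⊗(k+1)}`). -/
def TanSetHalf (r p n k : ℕ) : Set (TP n (k + 1) →ₗ[ℂ] TP n (k + 1)) :=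
  {T | ∃ d : SP (k + 1), (inA r p n d ∧ isHalf k d) ∧ T = phiX n (k + 1) d}

/-! ## The groups `G(r,p,n)` and `L(r,p,n)` as matrix groups. -/

/-- The monomial matrix with underlying permutation `π` and weights `a` :
its `(i,j)` entry is `a j` if `i = π j` and `0` otherwise, so that it maps
`v_j ↦ a j • v_{π j}`. -/
def monoMat (n : ℕ) (π : Equiv.Perm (Fin n)) (a : Fin n → ℂ) :
    Matrix (Fin n) (Fin n) ℂ :=
  Matrix.of fun i j => if i = π j then a j else 0

/-- `G(r,p,n)` as a set of matrices: matrices with exactly one nonzero entry in each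
row and column, whose nonzero entries are `r`-th roots of unity, and such that the
`m = r/p`-th power of the product of the nonzero entries is `1`. -/
def GSet (r p n : ℕ) : Set (Matrix (Fin n) (Fin n) ℂ) :=
  {g | ∃ (π : Equiv.Perm (Fin n)) (a : Fin n → ℂ),
    (∀ i, a i ^ r = 1) ∧ (∏ i, a i) ^ (r / p) = 1 ∧ g = monoMat n π a}

/-- The last index of `Fin n` (position `n` in 1-indexed notation). -/
def lastIdx (n : ℕ) (hn : 0 < n) : Fin n := ⟨n - 1, by omega⟩

/-- `L(r,p,n)` as a set of matrices: elements of `G(r,p,n)` whose `(n,n)` entry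
is nonzero. -/
def LSet (r p n : ℕ) (hn : 0 < n) : Set (Matrix (Fin n) (Fin n) ℂ) :=
  {g | g ∈ GSet r p n ∧ g (lastIdx n hn) (lastIdx n hn) ≠ 0}

/-- The centralizer algebra `End_{G(r,p,n)}(V^{⊗k})`. -/
def centG (r p n k : ℕ) : Set (TP n k →ₗ[ℂ] TP n k) :=
  {F | ∀ g ∈ GSet r p n, F ∘ₗ tensorPow n k g = tensorPow n k g ∘ₗ F}

/-- The subspace `W = V^{⊗k} ⊗ ℂ v_n` of `V^{⊗(k+1)}` : coordinate functions
supported on tuples whose last entry is the last index. -/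
def Wsub (n k : ℕ) (hn : 0 < n) : Submodule ℂ (TP n (k + 1)) where
  carrier := {f | ∀ j : Fin (k + 1) → Fin n, j (Fin.last k) ≠ lastIdx n hn → f j = 0}
  add_mem' := by
    intro a b ha hb j hj
    simp [Pi.add_apply, ha j hj, hb j hj]
  zero_mem' := by intro j hj; rfl
  smul_mem' := by
    intro c a ha j hj
    simp [Pi.smul_apply, ha j hj]


/-! ## Group structure -/

abbrev GLn (n : ℕ) := Matrix.GeneralLinearGroup (Fin n) ℂ

lemma monoMat_mul (n : ℕ) (π σ : Equiv.Perm (Fin n)) (a b : Fin n → ℂ) :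
    monoMat n π a * monoMat n σ b = monoMat n (π * σ) (fun j => a (σ j) * b j) := by
  ext i j
  simp only [monoMat, Matrix.mul_apply, Matrix.of_apply, mul_ite, mul_zero, ite_mul, zero_mul]
  rw [Finset.sum_ite_eq' Finset.univ (σ j)]
  simp [Equiv.Perm.mul_apply]
  congr

lemma monoMat_one (n : ℕ) : monoMat n 1 (fun _ => (1 : ℂ)) = 1 := by
  ext i j
  simp [monoMat, Matrix.one_apply]
  congr

lemma one_mem_GSet (r p n : ℕ) : (1 : Matrix (Fin n) (Fin n) ℂ) ∈ GSet r p n :=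
  ⟨1, fun _ => 1, fun _ => one_pow r, by simp, (monoMat_one n).symm⟩

lemma mul_mem_GSet {r p n : ℕ} {g h : Matrix (Fin n) (Fin n) ℂ}
    (hg : g ∈ GSet r p n) (hh : h ∈ GSet r p n) : g * h ∈ GSet r p n := by
  obtain ⟨π, a, ha, hpa, rfl⟩ := hg
  obtain ⟨σ, b, hb, hpb, rfl⟩ := hh
  refine ⟨π * σ, fun j => a (σ j) * b j, fun i => by rw [mul_pow, ha, hb, one_mul], ?_,
    monoMat_mul n π σ a b⟩
  have h1 : (∏ i, (a (σ i) * b i)) = (∏ i, a i) * ∏ i, b i := by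
    rw [Finset.prod_mul_distrib, Equiv.prod_comp σ a]
  rw [h1, mul_pow, hpa, hpb, one_mul]

lemma a_ne_zero {r : ℕ} (hr : 0 < r) {a : ℂ} (ha : a ^ r = 1) : a ≠ 0 := by
  intro h0
  rw [h0, zero_pow hr.ne'] at ha
  exact zero_ne_one ha

lemma monoMat_mul_inv (n : ℕ) (π : Equiv.Perm (Fin n)) (a : Fin n → ℂ)
    (ha : ∀ i, a i ≠ 0) :
    monoMat n π a * monoMat n π⁻¹ (fun j => (a (π⁻¹ j))⁻¹) = 1 := by
  simp only [monoMat_mul]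
  rw [mul_inv_cancel,
    show (fun j => a (π⁻¹ j) * (a (π⁻¹ j))⁻¹) = fun _ : Fin n => (1 : ℂ) from
      funext fun j => mul_inv_cancel₀ (ha _),
    monoMat_one]

/-- The value of the inverse of a unit whose underlying matrix is a monomial matrix. -/
lemma gl_inv_val {n : ℕ} (g : GLn n) (π : Equiv.Perm (Fin n)) (a : Fin n → ℂ)
    (ha : ∀ i, a i ≠ 0) (hg : (↑g : Matrix (Fin n) (Fin n) ℂ) = monoMat n π a) :
    (↑g⁻¹ : Matrix (Fin n) (Fin n) ℂ) = monoMat n π⁻¹ (fun j => (a (π⁻¹ j))⁻¹) := by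
  have hmul : (↑g : Matrix (Fin n) (Fin n) ℂ) *
      monoMat n π⁻¹ (fun j => (a (π⁻¹ j))⁻¹) = 1 := by
    rw [hg]; exact monoMat_mul_inv n π a ha
  calc (↑g⁻¹ : Matrix (Fin n) (Fin n) ℂ)
      = ↑g⁻¹ * ((↑g : Matrix (Fin n) (Fin n) ℂ) *
          monoMat n π⁻¹ (fun j => (a (π⁻¹ j))⁻¹)) := by rw [hmul, mul_one]
    _ = ((↑g⁻¹ : Matrix (Fin n) (Fin n) ℂ) * ↑g) *
          monoMat n π⁻¹ (fun j => (a (π⁻¹ j))⁻¹) := by rw [mul_assoc]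
    _ = monoMat n π⁻¹ (fun j => (a (π⁻¹ j))⁻¹) := by
          rw [← Units.val_mul, inv_mul_cancel, Units.val_one, one_mul]

lemma inv_mem_GSet {r p n : ℕ} (hr : 0 < r) {g : GLn n}
    (hg : (↑g : Matrix (Fin n) (Fin n) ℂ) ∈ GSet r p n) :
    (↑g⁻¹ : Matrix (Fin n) (Fin n) ℂ) ∈ GSet r p n := by
  obtain ⟨π, a, ha, hpa, hgm⟩ := hg
  have hane : ∀ i, a i ≠ 0 := fun i => a_ne_zero hr (ha i)
  refine ⟨π⁻¹, fun j => (a (π⁻¹ j))⁻¹, fun i => by rw [inv_pow, ha, inv_one], ?_,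
    gl_inv_val g π a hane hgm⟩
  rw [Finset.prod_inv_distrib, Equiv.prod_comp π⁻¹ a, inv_pow, hpa, inv_one]

/-- The complex reflection group `G(r,p,n)` as a subgroup of `GL_n(ℂ)`. -/
def GGroup (r p n : ℕ) (hr : 0 < r) : Subgroup (GLn n) where
  carrier := {g | (↑g : Matrix (Fin n) (Fin n) ℂ) ∈ GSet r p n}
  one_mem' := by
    show (↑(1 : GLn n) : Matrix (Fin n) (Fin n) ℂ) ∈ GSet r p n
    rw [Units.val_one]; exact one_mem_GSet r p n
  mul_mem' := by
    intro g h hg hh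
    show (↑(g * h) : Matrix (Fin n) (Fin n) ℂ) ∈ GSet r p n
    rw [Units.val_mul]; exact mul_mem_GSet hg hh
  inv_mem' := by
    intro g hg
    exact inv_mem_GSet hr hg

lemma monoMat_last {n : ℕ} (hn : 0 < n) (π : Equiv.Perm (Fin n)) (a : Fin n → ℂ)
    (h : monoMat n π a (lastIdx n hn) (lastIdx n hn) ≠ 0) :
    π (lastIdx n hn) = lastIdx n hn ∧ a (lastIdx n hn) ≠ 0 := by
  by_cases hp : lastIdx n hn = π (lastIdx n hn)
  · refine ⟨hp.symm, ?_⟩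
    intro h0
    apply h
    simp [monoMat, ← hp, h0]
  · exfalso; apply h; simp [monoMat, hp]

lemma monoMat_last_entry {n : ℕ} (hn : 0 < n) (π : Equiv.Perm (Fin n)) (a : Fin n → ℂ)
    (hp : π (lastIdx n hn) = lastIdx n hn) :
    monoMat n π a (lastIdx n hn) (lastIdx n hn) = a (lastIdx n hn) := by
  simp [monoMat, hp]

/-- The subgroup `L(r,p,n)` of `G(r,p,n)` (matrices with nonzero `(n,n)` entry). -/
def LGroup (r p n : ℕ) (hr : 0 < r) (hn : 0 < n) : Subgroup (GLn n) where
  carrier := {g | (↑g : Matrix (Fin n) (Fin n) ℂ) ∈ LSet r p n hn}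
  one_mem' := by
    refine ⟨?_, ?_⟩
    · show (↑(1 : GLn n) : Matrix (Fin n) (Fin n) ℂ) ∈ GSet r p n
      rw [Units.val_one]; exact one_mem_GSet r p n
    · rw [Units.val_one]
      simp [Matrix.one_apply]
  mul_mem' := by
    rintro g h ⟨hg, hge⟩ ⟨hh, hhe⟩
    refine ⟨?_, ?_⟩
    · show (↑(g * h) : Matrix (Fin n) (Fin n) ℂ) ∈ GSet r p n
      rw [Units.val_mul]; exact mul_mem_GSet hg hh
    · obtain ⟨π, a, ha, hpa, hgm⟩ := hg
      obtain ⟨σ, b, hb, hpb, hhm⟩ := hh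
      rw [hgm] at hge
      rw [hhm] at hhe
      obtain ⟨hπ, ha0⟩ := monoMat_last hn π a hge
      obtain ⟨hσ, hb0⟩ := monoMat_last hn σ b hhe
      rw [Units.val_mul, hgm, hhm, monoMat_mul]
      rw [monoMat_last_entry hn _ _ (by simp [Equiv.Perm.mul_apply, hσ, hπ])]
      simp only [hσ]
      exact mul_ne_zero ha0 hb0
  inv_mem' := by
    rintro g ⟨hg, hge⟩
    obtain ⟨π, a, ha, hpa, hgm⟩ := hg
    have hane : ∀ i, a i ≠ 0 := fun i => a_ne_zero hr (ha i)
    rw [hgm] at hge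
    obtain ⟨hπ, ha0⟩ := monoMat_last hn π a hge
    refine ⟨inv_mem_GSet hr ⟨π, a, ha, hpa, hgm⟩, ?_⟩
    rw [gl_inv_val g π a hane hgm]
    have hπi : π⁻¹ (lastIdx n hn) = lastIdx n hn := by
      conv_lhs => rw [← hπ]
      simp
    rw [monoMat_last_entry hn _ _ hπi]
    simp only [hπi]
    exact inv_ne_zero ha0

lemma GGroup_le (r p n : ℕ) (hr : 0 < r) : GGroup r p n hr ≤ GGroup r 1 n hr := by
  rintro g ⟨π, a, ha, hpa, hgm⟩
  refine ⟨π, a, ha, ?_, hgm⟩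
  rw [Nat.div_one, ← Finset.prod_pow]
  simp [ha]

lemma LGroup_le (r p n : ℕ) (hr : 0 < r) (hn : 0 < n) :
    LGroup r p n hr hn ≤ LGroup r 1 n hr hn := by
  rintro g ⟨hg, hge⟩
  exact ⟨GGroup_le r p n hr hg, hge⟩

lemma LGroup_le_GGroup (r p n : ℕ) (hr : 0 < r) (hn : 0 < n) :
    LGroup r p n hr hn ≤ GGroup r p n hr := fun _ hg => hg.1

lemma LGroup_le_G1 (r p n : ℕ) (hr : 0 < r) (hn : 0 < n) :
    LGroup r p n hr hn ≤ GGroup r 1 n hr :=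
  le_trans (LGroup_le_GGroup r p n hr hn) (GGroup_le r p n hr)

/-! ## Representation-theoretic notions -/

section Reps

variable {G : Type*} [Monoid G] {V : Type*} [AddCommGroup V] [Module ℂ V]

/-- A submodule invariant under a representation. -/
def RepInvariant (ρ : Representation ℂ G V) (q : Submodule ℂ V) : Prop :=
  ∀ (g : G), ∀ v ∈ q, ρ g v ∈ q

/-- Irreducibility of a representation. -/
def RepIrreducible (ρ : Representation ℂ G V) : Prop :=
  Nontrivial V ∧ ∀ q : Submodule ℂ V, RepInvariant ρ q → q = ⊥ ∨ q = ⊤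

/-- Irreducibility of an invariant subspace, as a subrepresentation. -/
def SubIrreducible (ρ : Representation ℂ G V) (q : Submodule ℂ V) : Prop :=
  q ≠ ⊥ ∧ ∀ q' : Submodule ℂ V, q' ≤ q → RepInvariant ρ q' → q' = ⊥ ∨ q' = q

/-- Two (invariant) subspaces are isomorphic as subrepresentations: there is a
`ℂ`-linear equivalence between them intertwining the action. -/
def IsSubrepIso (ρ : Representation ℂ G V) (q q' : Submodule ℂ V) : Prop :=
  ∃ e : q ≃ₗ[ℂ] q', ∀ (g : G) (x : V) (hx : x ∈ q) (hgx : ρ g x ∈ q),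
    ((e ⟨ρ g x, hgx⟩ : q') : V) = ρ g ((e ⟨x, hx⟩ : q') : V)

/-- A representation is multiplicity free: it is an (internal) direct sum of
pairwise non-isomorphic irreducible subrepresentations. -/
def RepMultFree (ρ : Representation ℂ G V) : Prop :=
  ∃ (ι : Type) (_ : Fintype ι) (W : ι → Submodule ℂ V),
    (∀ i, RepInvariant ρ (W i)) ∧
    (∀ i, SubIrreducible ρ (W i)) ∧
    iSupIndep W ∧ (⨆ i, W i) = ⊤ ∧
    (∀ i j, i ≠ j → ¬ IsSubrepIso ρ (W i) (W j))

/-- Restriction of a representation of `K` to a subgroup `H ≤ K`. -/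
def restrictRep {G : Type*} [Group G] {H K : Subgroup G} (h : H ≤ K)
    (ρ : Representation ℂ ↥K V) : Representation ℂ ↥H V :=
  MonoidHom.comp ρ (Subgroup.inclusion h)

end Reps

/-! ## The elements `ζ_i^l ζ_j^{-l} s_{ij}` and the central elements `κ` -/

/-- `ζ = exp(2πi/r)`, a primitive `r`-th root of unity. -/
def zeta (r : ℕ) : ℂ := Complex.exp (2 * Real.pi * Complex.I / r)

lemma zeta_pow_self {r : ℕ} (hr : 0 < r) : zeta r ^ r = 1 := by
  rw [zeta, ← Complex.exp_nat_mul]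
  rw [show (r : ℂ) * (2 * Real.pi * Complex.I / r) = 2 * Real.pi * Complex.I by
    rw [mul_div_assoc']
    exact mul_div_cancel_left₀ _ (Nat.cast_ne_zero.mpr hr.ne')]
  exact Complex.exp_two_pi_mul_I

lemma zeta_ne_zero (r : ℕ) : zeta r ≠ 0 := Complex.exp_ne_zero _

/-- Weights of the monomial matrix `ζ_i^l ζ_j^{-l} s_{ij}` : `ζ^l` in position `i`,
`ζ^{-l}` in position `j`, `1` elsewhere. -/
def zijWt (r l : ℕ) {n : ℕ} (i j : Fin n) : Fin n → ℂ :=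
  fun t => if t = i then zeta r ^ l else if t = j then (zeta r ^ l)⁻¹ else 1

/-- The matrix `ζ_i^l ζ_j^{-l} s_{ij}`. -/
def zijMat (n r l : ℕ) (i j : Fin n) : Matrix (Fin n) (Fin n) ℂ :=
  monoMat n (Equiv.swap i j) (zijWt r l i j)

lemma zijWt_ne_zero (r l : ℕ) {n : ℕ} (i j : Fin n) (t : Fin n) :
    zijWt r l i j t ≠ 0 := by
  unfold zijWt
  split_ifs
  · exact pow_ne_zero _ (zeta_ne_zero r)
  · exact inv_ne_zero (pow_ne_zero _ (zeta_ne_zero r))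
  · exact one_ne_zero

lemma zijWt_pow {r l : ℕ} (hr : 0 < r) {n : ℕ} (i j : Fin n) (t : Fin n) :
    zijWt r l i j t ^ r = 1 := by
  unfold zijWt
  split_ifs
  · rw [← pow_mul, mul_comm, pow_mul, zeta_pow_self hr, one_pow]
  · rw [inv_pow, ← pow_mul, mul_comm, pow_mul, zeta_pow_self hr, one_pow, inv_one]
  · exact one_pow r

lemma zijWt_prod {r l : ℕ} {n : ℕ} {i j : Fin n} (hij : i ≠ j) :
    (∏ t, zijWt r l i j t) = 1 := by
  have hfun : (fun t => zijWt r l i j t) =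
      fun t => (if t = i then zeta r ^ l else 1) * (if t = j then (zeta r ^ l)⁻¹ else 1) := by
    funext t
    by_cases h1 : t = i <;> by_cases h2 : t = j
    · exact absurd (h1.symm.trans h2) hij
    · simp [zijWt, h1, h2, hij]
    · simp [zijWt, h1, h2, hij, Ne.symm hij]
    · simp [zijWt, h1, h2]
  rw [hfun, Finset.prod_mul_distrib, Finset.prod_ite_eq' Finset.univ i,
    Finset.prod_ite_eq' Finset.univ j]
  simp [mul_inv_cancel₀ (pow_ne_zero l (zeta_ne_zero r))]

lemma zij_mem_GSet (r p n l : ℕ) (hr : 0 < r) (i j : Fin n) (hij : i ≠ j) :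
    zijMat n r l i j ∈ GSet r p n := by
  refine ⟨Equiv.swap i j, zijWt r l i j, zijWt_pow hr i j, ?_, rfl⟩
  rw [zijWt_prod hij, one_pow]

/-- A monomial matrix with nonzero weights, as an element of `GL_n(ℂ)`. -/
def monoUnit (n : ℕ) (π : Equiv.Perm (Fin n)) (a : Fin n → ℂ) (ha : ∀ i, a i ≠ 0) :
    GLn n where
  val := monoMat n π a
  inv := monoMat n π⁻¹ (fun j => (a (π⁻¹ j))⁻¹)
  val_inv := monoMat_mul_inv n π a ha
  inv_val := by
    simp only [monoMat_mul]
    rw [inv_mul_cancel,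
      show (fun j => (a (π⁻¹ (π j)))⁻¹ * a j) = fun _ : Fin n => (1 : ℂ) from
        funext fun j => by rw [show π⁻¹ (π j) = j from Equiv.Perm.inv_eq_iff_eq.mpr rfl, inv_mul_cancel₀ (ha _)],
      monoMat_one]

/-- The element `ζ_i^l ζ_j^{-l} s_{ij}` of `G(r,p,n)`. -/
def zijG (r p n l : ℕ) (hr : 0 < r) (i j : Fin n) (hij : i ≠ j) : ↥(GGroup r p n hr) :=
  ⟨monoUnit n (Equiv.swap i j) (zijWt r l i j) (zijWt_ne_zero r l i j),
   zij_mem_GSet r p n l hr i j hij⟩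

/-- The element `κ_{r,n} = (1/r)·Σ_{l<r} Σ_{i<j} ζ_i^l ζ_j^{-l} s_{ij}` of the group
algebra `ℂ[G(r,p,n)]`. -/
def kappaGA (r p n : ℕ) (hr : 0 < r) : MonoidAlgebra ℂ ↥(GGroup r p n hr) :=
  (1 / (r : ℂ)) • ∑ l ∈ Finset.range r, ∑ i : Fin n, ∑ j : Fin n,
    if h : i < j then MonoidAlgebra.single (zijG r p n l hr i j h.ne) 1 else 0

lemma zijL_last (r l : ℕ) {n : ℕ} (hn : 0 < n) (i j : Fin n)
    (hi : i ≠ lastIdx n hn) (hj : j ≠ lastIdx n hn) :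
    zijMat n r l i j (lastIdx n hn) (lastIdx n hn) ≠ 0 := by
  have hswap : Equiv.swap i j (lastIdx n hn) = lastIdx n hn :=
    Equiv.swap_apply_of_ne_of_ne (Ne.symm hi) (Ne.symm hj)
  rw [zijMat, monoMat_last_entry hn _ _ hswap]
  exact zijWt_ne_zero r l i j _

/-- The element `ζ_i^l ζ_j^{-l} s_{ij}` of `L(r,p,n)`, for `i, j ≤ n-1`. -/
def zijL (r p n l : ℕ) (hr : 0 < r) (hn : 0 < n) (i j : Fin n) (hij : i ≠ j)
    (hi : i ≠ lastIdx n hn) (hj : j ≠ lastIdx n hn) : ↥(LGroup r p n hr hn) :=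
  ⟨monoUnit n (Equiv.swap i j) (zijWt r l i j) (zijWt_ne_zero r l i j),
   ⟨zij_mem_GSet r p n l hr i j hij, zijL_last r l hn i j hi hj⟩⟩

/-- The element `κ_{r,n-1} = (1/r)·Σ_{l<r} Σ_{1≤i<j≤n-1} ζ_i^l ζ_j^{-l} s_{ij}` of the
group algebra `ℂ[L(r,p,n)]`. -/
def kappaLA (r p n : ℕ) (hr : 0 < r) (hn : 0 < n) :
    MonoidAlgebra ℂ ↥(LGroup r p n hr hn) :=
  (1 / (r : ℂ)) • ∑ l ∈ Finset.range r, ∑ i : Fin n, ∑ j : Fin n,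
    if h : i < j ∧ (j : ℕ) < n - 1 then
      MonoidAlgebra.single
        (zijL r p n l hr hn i j h.1.ne
          (by
            refine Fin.ne_of_val_ne ?_
            have h1 : (i : ℕ) < (j : ℕ) := h.1
            have h2 : (j : ℕ) < n - 1 := h.2
            show (i : ℕ) ≠ n - 1
            omega)
          (by
            refine Fin.ne_of_val_ne ?_
            have h2 : (j : ℕ) < n - 1 := h.2
            show (j : ℕ) ≠ n - 1
            omega)) 1
    else 0

/-! ## The induced representation of statement on `Ind_L^G σ` -/

/-- The right regular representation of a group `G` on the space of functions
`G → ℂ`, given by `(x · f)(g) = f(g x)`. -/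
def regRep (G : Type*) [Group G] : Representation ℂ G (G → ℂ) where
  toFun x :=
    { toFun := fun f => fun g => f (g * x)
      map_add' := fun f g => rfl
      map_smul' := fun c f => rfl }
  map_one' := by
    refine LinearMap.ext fun f => ?_
    funext g
    simp
  map_mul' x y := by
    refine LinearMap.ext fun f => ?_
    funext g
    simp [Module.End.mul_apply, mul_assoc]

/-- The space of functions `f : G(r,p,n) → ℂ` with `f(hg) = σ(h)·f(g)` for all
`h ∈ L(r,p,n)`, where `σ(h)` is the `(n,n)` entry of `h`. -/
def IndSig (r p n : ℕ) (hr : 0 < r) (hn : 0 < n) :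
    Submodule ℂ (↥(GGroup r p n hr) → ℂ) where
  carrier := {f | ∀ h g : ↥(GGroup r p n hr),
    ((h : GLn n) : Matrix (Fin n) (Fin n) ℂ) ∈ LSet r p n hn →
    f (h * g) = ((h : GLn n) : Matrix (Fin n) (Fin n) ℂ) (lastIdx n hn) (lastIdx n hn) * f g}
  add_mem' := by
    intro a b ha hb h g hh
    simp [ha h g hh, hb h g hh, mul_add]
  zero_mem' := by intro h g hh; simp
  smul_mem' := by
    intro c a ha h g hh
    simp [ha h g hh]
    ring

lemma IndSig_invariant (r p n : ℕ) (hr : 0 < r) (hn : 0 < n) :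
    RepInvariant (regRep ↥(GGroup r p n hr)) (IndSig r p n hr hn) := by
  intro x f hf h g hh
  show f ((h * g) * x) = _ * f (g * x)
  rw [mul_assoc]
  exact hf h (g * x) hh

/-- The natural representation of `G(r,p,n)` on `ℂ^n` by matrix-vector
multiplication. -/
def natRep (r p n : ℕ) (hr : 0 < r) : Representation ℂ ↥(GGroup r p n hr) (Fin n → ℂ) where
  toFun g := Matrix.mulVecLin ((g : GLn n) : Matrix (Fin n) (Fin n) ℂ)
  map_one' := by
    simp only [OneMemClass.coe_one, Units.val_one, Matrix.mulVecLin_one]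
    rfl
  map_mul' g h := by
    simp only [Subgroup.coe_mul, Units.val_mul, Matrix.mulVecLin_mul]
    rw [Module.End.mul_eq_comp]

/-! ## The operators `Z_{t,r}` and `Z_{t+1/2,r}` -/

/-- `S ∪ S′` as a finite subset of `Fin t ⊕ Fin t`. -/
def SSfin {t : ℕ} (S : Finset (Fin t)) : Finset (Fin t ⊕ Fin t) :=
  Finset.univ.filter fun x => Sum.elim (· ∈ S) (· ∈ S) x

/-- The set partition `b_S` with blocks `S ∪ S′` and `{l,l′}` for `l ∉ S`. -/
def bS {t : ℕ} (S : Finset (Fin t)) : SP t :=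
  Setoid.ker fun x : Fin t ⊕ Fin t =>
    if x ∈ SSfin S then (none : Option (Fin t ⊕ Fin t)) else some x

/-- The set partition `d_I` with blocks `I`, `(S ∪ S′) \ I` and `{l,l′}` for `l ∉ S`. -/
def dI {t : ℕ} (S : Finset (Fin t)) (I : Finset (Fin t ⊕ Fin t)) : SP t :=
  Setoid.ker fun x : Fin t ⊕ Fin t =>
    if x ∈ I then (Sum.inl true : Bool ⊕ (Fin t ⊕ Fin t))
    else if x ∈ SSfin S then Sum.inl false else Sum.inr x

/-- `N(I)` : the number of top-row (unprimed) elements of `I`. -/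
def NIc {t : ℕ} (I : Finset (Fin t ⊕ Fin t)) : ℕ :=
  (I.filter fun x => x.isLeft = true).card

/-- `M(I)` : the number of bottom-row (primed) elements of `I`. -/
def MIc {t : ℕ} (I : Finset (Fin t ⊕ Fin t)) : ℕ :=
  (I.filter fun x => x.isRight = true).card

/-- The operator `Z_{t,r}` on `V^{⊗t}`.  The inner sum over unordered partitions
`{I, (S∪S′)∖I}` (each counted once) is written as `1/2` times the sum over ordered
proper nonempty subsets `I` of `S ∪ S′`; these agree since `d_I = d_{(S∪S′)∖I}` and
the signs coincide. -/
def Zop (r n t : ℕ) : TP n t →ₗ[ℂ] TP n t :=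
  (n.choose 2 : ℂ) • LinearMap.id +
  ∑ S ∈ (Finset.univ : Finset (Fin t)).powerset.filter (fun S => S ≠ ∅),
    ((-1 : ℂ) ^ S.card) •
      (((n : ℂ) - 1) • phiD n t (bS S) +
        (1 / 2 : ℂ) •
          ∑ I ∈ (SSfin S).powerset.filter (fun I =>
              I ≠ ∅ ∧ I ≠ SSfin S ∧ ((NIc I : ℤ) ≡ (MIc I : ℤ) [ZMOD (r : ℤ)])),
            ((-1 : ℂ) ^ ((NIc I : ℤ) - (MIc I : ℤ))) • (phiD n t (dI S I) - phiD n t (bS S)))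

/-- The operator `Z_{k+1/2,r}` on `V^{⊗(k+1)}`; as in `Zop`, but for `S` containing
`k+1` the inner sum is restricted to partitions in which `k+1` and `(k+1)′` lie in the
same part. -/
def ZopHalf (r n k : ℕ) : TP n (k + 1) →ₗ[ℂ] TP n (k + 1) :=
  (n.choose 2 : ℂ) • LinearMap.id +
  ∑ S ∈ (Finset.univ : Finset (Fin (k + 1))).powerset.filter (fun S => S ≠ ∅),
    ((-1 : ℂ) ^ S.card) •
      (((n : ℂ) - 1) • phiD n (k + 1) (bS S) +
        (1 / 2 : ℂ) •
          ∑ I ∈ (SSfin S).powerset.filter (fun I =>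
              I ≠ ∅ ∧ I ≠ SSfin S ∧ ((NIc I : ℤ) ≡ (MIc I : ℤ) [ZMOD (r : ℤ)]) ∧
              (Fin.last k ∈ S →
                ((Sum.inl (Fin.last k) : Fin (k+1) ⊕ Fin (k+1)) ∈ I ↔
                  (Sum.inr (Fin.last k) : Fin (k+1) ⊕ Fin (k+1)) ∈ I))),
            ((-1 : ℂ) ^ ((NIc I : ℤ) - (MIc I : ℤ))) •
              (phiD n (k + 1) (dI S I) - phiD n (k + 1) (bS S)))

/-- The diagonal action of `κ_{r,n}` on `V^{⊗k}`. -/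
def kappaOpFull (r n k : ℕ) : TP n k →ₗ[ℂ] TP n k :=
  (1 / (r : ℂ)) • ∑ l ∈ Finset.range r, ∑ i : Fin n, ∑ j : Fin n,
    if i < j then tensorPow n k (zijMat n r l i j) else 0

/-- The diagonal action of `κ_{r,n-1}` on `V^{⊗(k+1)}`. -/
def kappaOpL (r n k : ℕ) : TP n (k + 1) →ₗ[ℂ] TP n (k + 1) :=
  (1 / (r : ℂ)) • ∑ l ∈ Finset.range r, ∑ i : Fin n, ∑ j : Fin n,
    if i < j ∧ (j : ℕ) < n - 1 then tensorPow n (k + 1) (zijMat n r l i j) else 0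

/-- `w ⊗ v_n ∈ V^{⊗(k+1)}` for `w ∈ V^{⊗k}`. -/
def extendLast (n k : ℕ) (hn : 0 < n) (w : TP n k) : TP n (k + 1) :=
  fun j => if j (Fin.last k) = lastIdx n hn then w (fun t => j t.castSucc) else 0

/-- `A ⊗ Id_{V^{⊗(l-j)}}` : the extension of an operator on `V^{⊗j}` to `V^{⊗l}`,
acting on the first `j` tensor factors. -/
def extendOp (n j l : ℕ) (hjl : j ≤ l) (A : TP n j →ₗ[ℂ] TP n j) :
    TP n l →ₗ[ℂ] TP n l where
  toFun f := fun u =>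
    A (fun x : Fin j → Fin n =>
        f (fun t : Fin l => if h : (t : ℕ) < j then x ⟨t, h⟩ else u t))
      (fun s : Fin j => u (Fin.castLE hjl s))
  map_add' f g := by
    funext u
    show A (fun x : Fin j → Fin n =>
        (f + g) (fun t : Fin l => if h : (t : ℕ) < j then x ⟨t, h⟩ else u t))
      (fun s : Fin j => u (Fin.castLE hjl s)) =
      A (fun x : Fin j → Fin n =>
        f (fun t : Fin l => if h : (t : ℕ) < j then x ⟨t, h⟩ else u t))
      (fun s : Fin j => u (Fin.castLE hjl s)) +
      A (fun x : Fin j → Fin n =>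
        g (fun t : Fin l => if h : (t : ℕ) < j then x ⟨t, h⟩ else u t))
      (fun s : Fin j => u (Fin.castLE hjl s))
    have h : (fun x : Fin j → Fin n =>
        (f + g) (fun t : Fin l => if h : (t : ℕ) < j then x ⟨t, h⟩ else u t)) =
      (fun x : Fin j → Fin n =>
        f (fun t : Fin l => if h : (t : ℕ) < j then x ⟨t, h⟩ else u t)) +
      (fun x : Fin j → Fin n =>
        g (fun t : Fin l => if h : (t : ℕ) < j then x ⟨t, h⟩ else u t)) := rfl
    rw [h, map_add]
    rfl
  map_smul' c f := by
    funext u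
    show A (fun x : Fin j → Fin n =>
        (c • f) (fun t : Fin l => if h : (t : ℕ) < j then x ⟨t, h⟩ else u t))
      (fun s : Fin j => u (Fin.castLE hjl s)) =
      c • (A (fun x : Fin j → Fin n =>
        f (fun t : Fin l => if h : (t : ℕ) < j then x ⟨t, h⟩ else u t))
      (fun s : Fin j => u (Fin.castLE hjl s)))
    have h : (fun x : Fin j → Fin n =>
        (c • f) (fun t : Fin l => if h : (t : ℕ) < j then x ⟨t, h⟩ else u t)) =
      c • (fun x : Fin j → Fin n =>
        f (fun t : Fin l => if h : (t : ℕ) < j then x ⟨t, h⟩ else u t)) := rfl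
    rw [h, _root_.map_smul]
    rfl

/-! ## Diagram multiplication (statement of the structure constants) -/

/-- The bottom row of `d₁` matches the top row of `d₂`. -/
def rowMatch (k : ℕ) (d1 d2 : SP k) : Prop :=
  ∀ i j : Fin k, d1.r (Sum.inr i) (Sum.inr j) ↔ d2.r (Sum.inl i) (Sum.inl j)

/-- Extend a setoid on `α` along an injection `e : α → β` by singleton classes on
the complement of the range. -/
def extendSetoid {α β : Type*} (e : α → β) (he : Function.Injective e)
    (d : Setoid α) : Setoid β where
  r x y := x = y ∨ ∃ a b, d.r a b ∧ x = e a ∧ y = e b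
  iseqv := by
    constructor
    · intro x; exact Or.inl rfl
    · rintro x y (rfl | ⟨a, b, hab, rfl, rfl⟩)
      · exact Or.inl rfl
      · exact Or.inr ⟨b, a, d.iseqv.symm hab, rfl, rfl⟩
    · rintro x y z (rfl | ⟨a, b, hab, rfl, rfl⟩) h2
      · exact h2
      · rcases h2 with rfl | ⟨a', b', hab', hy, rfl⟩
        · exact Or.inr ⟨a, b, hab, rfl, rfl⟩
        · have hba : b = a' := he hy
          exact Or.inr ⟨a, b', d.iseqv.trans hab (hba ▸ hab'), rfl, rfl⟩

/-- The three-row vertex set: top row, middle row, bottom row. -/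
abbrev T3 (k : ℕ) : Type := Fin k ⊕ (Fin k ⊕ Fin k)

/-- `d₁` placed on the top and middle rows. -/
def embT (k : ℕ) : Fin k ⊕ Fin k → T3 k := Sum.map id Sum.inl

/-- `d₂` placed on the middle and bottom rows. -/
def embB (k : ℕ) : Fin k ⊕ Fin k → T3 k := Sum.inr

/-- The outer (top and bottom) rows. -/
def embO (k : ℕ) : Fin k ⊕ Fin k → T3 k := Sum.map id Sum.inr

lemma embT_inj (k : ℕ) : Function.Injective (embT k) :=
  Function.Injective.sumMap Function.injective_id Sum.inl_injective

/-- The stacked three-row diagram : the join of `d₁` (on top∪middle) and `d₂`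
(on middle∪bottom); its classes are the connected components. -/
def stacked (k : ℕ) (d1 d2 : SP k) : Setoid (T3 k) :=
  extendSetoid (embT k) (embT_inj k) d1 ⊔ extendSetoid (embB k) Sum.inr_injective d2

/-- The concatenation `d₁ ∘ d₂`, i.e. the restriction of the stacked diagram to the
outer rows. -/
def compSetoid (k : ℕ) (d1 d2 : SP k) : SP k :=
  Setoid.comap (embO k) (stacked k d1 d2)

/-- `[d₁ ∘ d₂]` : the number of connected components of the stacked diagram contained
entirely in the middle row. -/
def midCount (k : ℕ) (d1 d2 : SP k) : ℕ :=
  Nat.card {q : Quotient (stacked k d1 d2) //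
    ∀ x : T3 k, Quotient.mk (stacked k d1 d2) x = q → ∃ i : Fin k, x = Sum.inr (Sum.inl i)}

/-- A block entirely contained in the top row. -/
def topOnly {k : ℕ} (d : SP k) (q : Quotient d) : Prop :=
  ∀ x, Quotient.mk d x = q → ∃ i : Fin k, x = Sum.inl i

/-- A block entirely contained in the bottom row. -/
def botOnly {k : ℕ} (d : SP k) (q : Quotient d) : Prop :=
  ∀ x, Quotient.mk d x = q → ∃ i : Fin k, x = Sum.inr i

/-- `x` lies in the block merged from the pair `pr = (q₁, q₂)`. -/
def memPair {k : ℕ} (d1 d2 : SP k) : Fin k ⊕ Fin k → Quotient d1 × Quotient d2 → Prop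
  | Sum.inl i, pr => Quotient.mk d1 (Sum.inl i) = pr.1
  | Sum.inr i, pr => Quotient.mk d2 (Sum.inr i) = pr.2

/-- `d` is obtained from `d₁ ∘ d₂` by choosing an injective partial matching between
the top-only blocks of `d₁` and the bottom-only blocks of `d₂` and merging each
matched pair into a single block. -/
def IsCoarsening (k : ℕ) (d1 d2 d : SP k) : Prop :=
  ∃ P : Finset (Quotient d1 × Quotient d2),
    (∀ pr ∈ P, topOnly d1 pr.1 ∧ botOnly d2 pr.2) ∧
    (∀ pr ∈ P, ∀ pr' ∈ P, pr.1 = pr'.1 → pr = pr') ∧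
    (∀ pr ∈ P, ∀ pr' ∈ P, pr.2 = pr'.2 → pr = pr') ∧
    (∀ x y : Fin k ⊕ Fin k, d.r x y ↔
      ((compSetoid k d1 d2).r x y ∨ ∃ pr ∈ P, memPair d1 d2 x pr ∧ memPair d1 d2 y pr))

/-- The (integer) falling factorial `(a)_b = a(a-1)⋯(a-b+1)`. -/
def fallingC (a : ℤ) (b : ℕ) : ℤ := ∏ i ∈ Finset.range b, (a - i)

/-! ## The elements `c₁, c₂` of `G(2,2,2k)` and the operator `M_{k,2,2}` -/

/-- The underlying function of the permutation `(1 2)(3 4)⋯(2k-1 2k)` of `Fin (2k)`: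
it swaps `2t` and `2t+1` (0-indexed) for each `t < k`. -/
def pairFn (k : ℕ) : Fin (2 * k) → Fin (2 * k) := fun x =>
  if _ : (x : ℕ) % 2 = 0 then ⟨(x : ℕ) + 1, by have := x.2; omega⟩
  else ⟨(x : ℕ) - 1, by have := x.2; omega⟩

lemma pairFn_invol (k : ℕ) : Function.Involutive (pairFn k) := by
  intro x
  unfold pairFn
  split_ifs with h1 h2 h3
  · refine Fin.ext ?_; simp only [Fin.val_mk] at h2 ⊢; omega
  · refine Fin.ext ?_; simp only [Fin.val_mk] at h2 ⊢; omega
  · refine Fin.ext ?_; simp only [Fin.val_mk] at h3 ⊢; omega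
  · refine Fin.ext ?_; simp only [Fin.val_mk] at h3 ⊢; omega

/-- The permutation `(1 2)(3 4)⋯(2k-1 2k)` of `Fin (2k)`. -/
def pairPerm (k : ℕ) : Equiv.Perm (Fin (2 * k)) :=
  Function.Involutive.toPerm (pairFn k) (pairFn_invol k)

/-- `c₂` : the permutation matrix of `(1 2)(3 4)⋯(2k-1 2k)`. -/
def c2Mat (k : ℕ) : Matrix (Fin (2 * k)) (Fin (2 * k)) ℂ :=
  monoMat (2 * k) (pairPerm k) (fun _ => 1)

/-- The diagonal matrix `diag(-1,-1,1,…,1)`. -/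
def dMat (k : ℕ) : Matrix (Fin (2 * k)) (Fin (2 * k)) ℂ :=
  Matrix.diagonal fun t => if (t : ℕ) < 2 then (-1 : ℂ) else 1

/-- `c₁ = D · c₂`. -/
def c1Mat (k : ℕ) : Matrix (Fin (2 * k)) (Fin (2 * k)) ℂ := dMat k * c2Mat k

/-- Two matrices are conjugate by an element of `G(r,p,n)`. -/
def conjIn (r p n : ℕ) (c x : Matrix (Fin n) (Fin n) ℂ) : Prop :=
  ∃ g ∈ GSet r p n, g * c = x * g

/-- The conjugacy class of `c` in `G(r,p,n)`. -/
def conjClass (r p n : ℕ) (c : Matrix (Fin n) (Fin n) ℂ) :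
    Set (Matrix (Fin n) (Fin n) ℂ) :=
  {h | h ∈ GSet r p n ∧ conjIn r p n c h}

/-- The set partition of `{1,…,k,1′,…,k′}` all of whose blocks are singletons. -/
def singletonSP (k : ℕ) : SP k := ⟨Eq, eq_equivalence⟩

/-- The operator `M_{k,2,2} = φ_k(x_{d₀})` on `(ℂ^{2k})^{⊗k}`, where `d₀` is the set
partition with all blocks singletons. -/
def Mop (k : ℕ) : TP (2 * k) k →ₗ[ℂ] TP (2 * k) k :=
  phiX (2 * k) k (singletonSP k)

/-!
The matrices of `φ(x_{d₁})` and `φ(x_{d₂})` are `0/1`, so the `(o, i)` entry of the product counts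
the middle tuples `m` for which the three-row labelling `(i, m, o)` induces exactly `d₁` on the top
two rows and exactly `d₂` on the bottom two (a gluing). A gluing forces the rows to match and is
constant on the blocks of the stacked diagram. Blocks meeting the outer rows take the labels
prescribed by `(i, o)`; two of them can share a label only if one is a top-only block of `d₁` and
the other a bottom-only block of `d₂`, so `ker (i, o)` is one of the coarsenings `d` of `d₁ ∘ d₂`
in the sum. The `[d₁ ∘ d₂]` middle blocks take pairwise distinct labels outside the `|d|` used
by `(i, o)`, and conversely every such injective choice yields a gluing; hence the entry is
`(n - |d|)_{[d₁ ∘ d₂]}` when `ker (i, o) = d`.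
-/

section Gluing

variable {k : ℕ} {d1 d2 : SP k} {α : Type*}

lemma extendSetoid_le_iff {β γ : Type*} {e : β → γ} (he : Function.Injective e)
    {d : Setoid β} {s : Setoid γ} : extendSetoid e he d ≤ s ↔ d ≤ s.comap e := by
  refine ⟨fun h a b hab => h (Or.inr ⟨a, b, hab, rfl, rfl⟩), ?_⟩
  rintro h x y (rfl | ⟨a, b, hab, rfl, rfl⟩)
  · exact s.iseqv.refl x
  · exact h hab

lemma stacked_le_iff {s : Setoid (T3 k)} :
    stacked k d1 d2 ≤ s ↔ d1 ≤ s.comap (embT k) ∧ d2 ≤ s.comap (embB k) :=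
  sup_le_iff.trans (and_congr (extendSetoid_le_iff _) (extendSetoid_le_iff _))

lemma le_comap_embT_stacked : d1 ≤ (stacked k d1 d2).comap (embT k) :=
  (stacked_le_iff.mp le_rfl).1

lemma le_comap_embB_stacked : d2 ≤ (stacked k d1 d2).comap (embB k) :=
  (stacked_le_iff.mp le_rfl).2

def IsGluing (d1 d2 : SP k) (F : T3 k → α) : Prop :=
  Setoid.ker (F ∘ embT k) = d1 ∧ Setoid.ker (F ∘ embB k) = d2

namespace IsGluing

variable {F : T3 k → α}

lemma stacked_le_ker (hF : IsGluing d1 d2 F) : stacked k d1 d2 ≤ Setoid.ker F := by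
  obtain ⟨rfl, rfl⟩ := hF
  exact stacked_le_iff.mpr ⟨le_rfl, le_rfl⟩

lemma rowMatch (hF : IsGluing d1 d2 F) : rowMatch k d1 d2 := by
  obtain ⟨rfl, rfl⟩ := hF
  exact fun _ _ => Iff.rfl

lemma comap_embT_stacked (hF : IsGluing d1 d2 F) : (stacked k d1 d2).comap (embT k) = d1 :=
  le_antisymm (fun _ _ h => by rw [← hF.1]; exact hF.stacked_le_ker h) le_comap_embT_stacked

lemma comap_embB_stacked (hF : IsGluing d1 d2 F) : (stacked k d1 d2).comap (embB k) = d2 :=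
  le_antisymm (fun _ _ h => by rw [← hF.2]; exact hF.stacked_le_ker h) le_comap_embB_stacked

lemma stacked_of_eq_middle (hF : IsGluing d1 d2 F) {x : T3 k} {t : Fin k}
    (h : F x = F (.inr (.inl t))) : (stacked k d1 d2).r x (.inr (.inl t)) := by
  obtain ⟨rfl, rfl⟩ := hF
  rcases x with a | y
  · exact le_comap_embT_stacked (x := .inl a) (y := .inr t) h
  · exact le_comap_embB_stacked (x := y) (y := .inl t) h

end IsGluing

/-- With matching rows, a block of the stacked diagram is named by the block of `d₁` it meets,
unless it is a bottom-only block of `d₂`, which names itself. -/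
def canonicalGluing (d1 d2 : SP k) : T3 k → Quotient d1 ⊕ Quotient d2
  | .inl a => .inl (Quotient.mk d1 (.inl a))
  | .inr (.inl t) => .inl (Quotient.mk d1 (.inr t))
  | .inr (.inr b) =>
    if h : ∃ t, d2.r (.inl t) (.inr b) then .inl (Quotient.mk d1 (.inr h.choose))
    else .inr (Quotient.mk d2 (.inr b))

lemma canonicalGluing_embT (a : Fin k ⊕ Fin k) :
    canonicalGluing d1 d2 (embT k a) = .inl (Quotient.mk d1 a) := by
  rcases a with a | a <;> rfl

lemma canonicalGluing_embB_of_rel (hm : rowMatch k d1 d2) {t : Fin k} {y : Fin k ⊕ Fin k}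
    (h : d2.r (.inl t) y) : canonicalGluing d1 d2 (embB k y) = .inl (Quotient.mk d1 (.inr t)) := by
  rcases y with s | b
  · exact congrArg Sum.inl (Quotient.sound ((hm s t).mpr (d2.iseqv.symm h)))
  · have hex : ∃ t, d2.r (.inl t) (.inr b) := ⟨t, h⟩
    simp only [embB, canonicalGluing, dif_pos hex]
    exact congrArg Sum.inl
      (Quotient.sound ((hm _ t).mpr (d2.iseqv.trans hex.choose_spec (d2.iseqv.symm h))))

lemma canonicalGluing_embB_of_not_rel {y : Fin k ⊕ Fin k} (h : ¬ ∃ t, d2.r (.inl t) y) :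
    canonicalGluing d1 d2 (embB k y) = .inr (Quotient.mk d2 y) := by
  rcases y with s | b
  · exact absurd ⟨s, d2.iseqv.refl _⟩ h
  · simp only [embB, canonicalGluing, dif_neg h]

lemma isGluing_canonicalGluing (hm : rowMatch k d1 d2) :
    IsGluing d1 d2 (canonicalGluing d1 d2) := by
  refine ⟨Setoid.ext fun a b => ?_, Setoid.ext fun y y' => ?_⟩
  · simp only [Setoid.ker_def, Function.comp_apply, canonicalGluing_embT, Sum.inl.injEq]
    exact Quotient.eq
  · simp only [Setoid.ker_def, Function.comp_apply]
    by_cases hy : ∃ t, d2.r (.inl t) y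
    · obtain ⟨t, ht⟩ := hy
      rw [canonicalGluing_embB_of_rel hm ht]
      by_cases hy' : ∃ t', d2.r (.inl t') y'
      · obtain ⟨t', ht'⟩ := hy'
        rw [canonicalGluing_embB_of_rel hm ht', Sum.inl.injEq, Quotient.eq, hm]
        exact ⟨fun h => d2.iseqv.trans (d2.iseqv.symm ht) (d2.iseqv.trans h ht'),
          fun h => d2.iseqv.trans ht (d2.iseqv.trans h (d2.iseqv.symm ht'))⟩
      · rw [canonicalGluing_embB_of_not_rel hy']
        exact ⟨fun h => (Sum.inl_ne_inr h).elim, fun h => absurd ⟨t, d2.iseqv.trans ht h⟩ hy'⟩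
    · rw [canonicalGluing_embB_of_not_rel hy]
      by_cases hy' : ∃ t', d2.r (.inl t') y'
      · obtain ⟨t', ht'⟩ := hy'
        rw [canonicalGluing_embB_of_rel hm ht']
        exact ⟨fun h => (Sum.inr_ne_inl h).elim,
          fun h => absurd ⟨t', d2.iseqv.trans ht' (d2.iseqv.symm h)⟩ hy⟩
      · rw [canonicalGluing_embB_of_not_rel hy', Sum.inr.injEq, Quotient.eq]

lemma comap_embT_stacked (hm : rowMatch k d1 d2) : (stacked k d1 d2).comap (embT k) = d1 :=
  (isGluing_canonicalGluing hm).comap_embT_stacked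

lemma comap_embB_stacked (hm : rowMatch k d1 d2) : (stacked k d1 d2).comap (embB k) = d2 :=
  (isGluing_canonicalGluing hm).comap_embB_stacked

end Gluing

section Isolation

variable {k : ℕ} {d1 d2 : SP k}

lemma not_stacked_embT_embB_of_topOnly {a : Fin k ⊕ Fin k}
    (ha : topOnly d1 (Quotient.mk d1 a)) (b : Fin k ⊕ Fin k) :
    ¬ (stacked k d1 d2).r (embT k a) (embB k b) := by
  -- a top-only block of `d₁` is by itself a union of blocks of the stacked diagram
  let χ : T3 k → Prop := fun x => ∃ a', x = embT k a' ∧ d1.r a a'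
  have hχB : ∀ z, ¬ χ (embB k z) := by
    rintro z ⟨a' | t, he, hr⟩
    · exact Sum.inr_ne_inl he
    · obtain ⟨i, hi⟩ := ha (.inr t) (Quotient.sound (d1.iseqv.symm hr))
      exact Sum.inr_ne_inl hi
  have hle : stacked k d1 d2 ≤ Setoid.ker χ := by
    refine stacked_le_iff.mpr
      ⟨fun x y hxy => ?_, fun x y _ => propext (iff_of_false (hχB x) (hχB y))⟩
    refine propext ⟨?_, ?_⟩ <;> rintro ⟨a', he, hr⟩ <;> obtain rfl := embT_inj k he
    exacts [⟨y, rfl, d1.iseqv.trans hr hxy⟩, ⟨x, rfl, d1.iseqv.trans hr (d1.iseqv.symm hxy)⟩]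
  intro h
  exact hχB b ((hle h : χ (embT k a) = χ (embB k b)) ▸ ⟨a, rfl, d1.iseqv.refl a⟩)

lemma not_stacked_embT_embB_of_botOnly {b : Fin k ⊕ Fin k}
    (hb : botOnly d2 (Quotient.mk d2 b)) (a : Fin k ⊕ Fin k) :
    ¬ (stacked k d1 d2).r (embT k a) (embB k b) := by
  let χ : T3 k → Prop := fun x => ∃ b', x = embB k b' ∧ d2.r b b'
  have hχT : ∀ z, ¬ χ (embT k z) := by
    rintro (a' | t) ⟨b', he, hr⟩
    · exact Sum.inl_ne_inr he
    · obtain rfl : Sum.inl t = b' := Sum.inr_injective he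
      obtain ⟨i, hi⟩ := hb (.inl t) (Quotient.sound (d2.iseqv.symm hr))
      exact Sum.inl_ne_inr hi
  have hle : stacked k d1 d2 ≤ Setoid.ker χ := by
    refine stacked_le_iff.mpr
      ⟨fun x y _ => propext (iff_of_false (hχT x) (hχT y)), fun x y hxy => ?_⟩
    refine propext ⟨?_, ?_⟩ <;> rintro ⟨b', he, hr⟩ <;> obtain rfl := Sum.inr_injective he
    exacts [⟨y, rfl, d2.iseqv.trans hr hxy⟩, ⟨x, rfl, d2.iseqv.trans hr (d2.iseqv.symm hxy)⟩]
  intro h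
  exact hχT a ((hle h : χ (embT k a) = χ (embB k b)) ▸ ⟨b, rfl, d2.iseqv.refl b⟩)

lemma mk_eq_of_memPair_of_stacked_embT (hm : rowMatch k d1 d2) {pr : Quotient d1 × Quotient d2}
    (hpr : topOnly d1 pr.1 ∧ botOnly d2 pr.2) {u a : Fin k ⊕ Fin k} (hu : memPair d1 d2 u pr)
    (h : (stacked k d1 d2).r (embO k u) (embT k a)) : Quotient.mk d1 a = pr.1 := by
  rcases u with u | u
  · rw [← (hu : Quotient.mk d1 (.inl u) = pr.1)]
    exact Quotient.sound (d1.iseqv.symm ((comap_embT_stacked hm).le (x := .inl u) h))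
  · exact absurd ((stacked k d1 d2).iseqv.symm h)
      (not_stacked_embT_embB_of_botOnly ((hu : Quotient.mk d2 (.inr u) = pr.2) ▸ hpr.2) a)

lemma mk_eq_of_memPair_of_stacked_embB (hm : rowMatch k d1 d2) {pr : Quotient d1 × Quotient d2}
    (hpr : topOnly d1 pr.1 ∧ botOnly d2 pr.2) {u a : Fin k ⊕ Fin k} (hu : memPair d1 d2 u pr)
    (h : (stacked k d1 d2).r (embO k u) (embB k a)) : Quotient.mk d2 a = pr.2 := by
  rcases u with u | u
  · exact absurd h (not_stacked_embT_embB_of_topOnly (a := .inl u)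
      ((hu : Quotient.mk d1 (.inl u) = pr.1) ▸ hpr.1) a)
  · rw [← (hu : Quotient.mk d2 (.inr u) = pr.2)]
    exact Quotient.sound (d2.iseqv.symm ((comap_embB_stacked hm).le (x := .inr u) h))

end Isolation

namespace IsGluing

variable {k : ℕ} {d1 d2 : SP k} {α : Type*} {F : T3 k → α}

lemma topOnly_botOnly_of_not_stacked (hF : IsGluing d1 d2 F) {a b : Fin k}
    (hab : F (.inl a) = F (.inr (.inr b)))
    (hns : ¬ (stacked k d1 d2).r (.inl a) (.inr (.inr b))) :
    topOnly d1 (Quotient.mk d1 (.inl a)) ∧ botOnly d2 (Quotient.mk d2 (.inr b)) := by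
  have hmid : ∀ t, F (.inr (.inl t)) ≠ F (.inl a) := fun t ht =>
    hns ((stacked k d1 d2).iseqv.trans (hF.stacked_of_eq_middle ht.symm)
      ((stacked k d1 d2).iseqv.symm (hF.stacked_of_eq_middle (hab.symm.trans ht.symm))))
  obtain ⟨rfl, rfl⟩ := hF
  refine ⟨?_, ?_⟩
  · rintro (i | t) hz
    · exact ⟨i, rfl⟩
    · exact (hmid t (Quotient.exact hz)).elim
  · rintro (t | i) hz
    · exact (hmid t ((Quotient.exact hz).trans hab.symm)).elim
    · exact ⟨i, rfl⟩

lemma isCoarsening_ker (hF : IsGluing d1 d2 F) :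
    IsCoarsening k d1 d2 (Setoid.ker (F ∘ embO k)) := by
  have hstacked := hF.stacked_le_ker
  have hcross := @hF.topOnly_botOnly_of_not_stacked
  obtain ⟨rfl, rfl⟩ := hF
  let v1 := Setoid.kerLift (F ∘ embT k)
  let v2 := Setoid.kerLift (F ∘ embB k)
  let P := Finset.univ.filter fun pr : Quotient (Setoid.ker (F ∘ embT k)) ×
    Quotient (Setoid.ker (F ∘ embB k)) => topOnly _ pr.1 ∧ botOnly _ pr.2 ∧ v1 pr.1 = v2 pr.2
  have hP : ∀ {pr}, pr ∈ P ↔ topOnly _ pr.1 ∧ botOnly _ pr.2 ∧ v1 pr.1 = v2 pr.2 := by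
    simp [P]
  have hval : ∀ pr ∈ P, ∀ x, memPair _ _ x pr → F (embO k x) = v1 pr.1 := by
    rintro pr hpr (a | b) hx
    · rw [← (hx : Quotient.mk _ (.inl a) = pr.1)]; rfl
    · rw [(hP.mp hpr).2.2, ← (hx : Quotient.mk _ (.inr b) = pr.2)]; rfl
  refine ⟨P, fun pr hpr => ⟨(hP.mp hpr).1, (hP.mp hpr).2.1⟩,
    fun pr hpr pr' hpr' h => Prod.ext h (Setoid.kerLift_injective _ ?_),
    fun pr hpr pr' hpr' h => Prod.ext (Setoid.kerLift_injective _ ?_) h, fun x y => ⟨?_, ?_⟩⟩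
  · exact (hP.mp hpr).2.2.symm.trans ((congrArg v1 h).trans (hP.mp hpr').2.2)
  · exact (hP.mp hpr).2.2.trans ((congrArg v2 h).trans (hP.mp hpr').2.2.symm)
  · intro hxy
    by_cases hc : (compSetoid k (Setoid.ker (F ∘ embT k)) (Setoid.ker (F ∘ embB k))).r x y
    · exact .inl hc
    right
    rcases x with a | a <;> rcases y with b | b
    · exact (hc (le_comap_embT_stacked (x := .inl a) (y := .inl b) hxy)).elim
    · obtain ⟨ht, hb⟩ := hcross hxy hc
      exact ⟨(Quotient.mk _ (.inl a), Quotient.mk _ (.inr b)), hP.mpr ⟨ht, hb, hxy⟩, rfl, rfl⟩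
    · obtain ⟨ht, hb⟩ := hcross hxy.symm fun h => hc ((stacked k _ _).iseqv.symm h)
      exact ⟨(Quotient.mk _ (.inl b), Quotient.mk _ (.inr a)), hP.mpr ⟨ht, hb, hxy.symm⟩, rfl, rfl⟩
    · exact (hc (le_comap_embB_stacked (x := .inr a) (y := .inr b) hxy)).elim
  · rintro (hc | ⟨pr, hpr, hx, hy⟩)
    · exact hstacked hc
    · exact (hval pr hpr x hx).trans (hval pr hpr y hy).symm

end IsGluing

section Counting

variable {k : ℕ} {d1 d2 : SP k} {α : Type*}

def IsMiddleBlock (d1 d2 : SP k) (q : Quotient (stacked k d1 d2)) : Prop :=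
  ∀ x : T3 k, Quotient.mk (stacked k d1 d2) x = q → ∃ i : Fin k, x = .inr (.inl i)

lemma not_isMiddleBlock_mk_embO (y : Fin k ⊕ Fin k) :
    ¬ IsMiddleBlock d1 d2 (Quotient.mk _ (embO k y)) := by
  intro h
  obtain ⟨i, hi⟩ := h _ rfl
  rcases y with a | b <;> simp [embO] at hi

lemma exists_mk_embO_of_not_isMiddleBlock {q : Quotient (stacked k d1 d2)}
    (hq : ¬ IsMiddleBlock d1 d2 q) : ∃ y, Quotient.mk _ (embO k y) = q := by
  simp only [IsMiddleBlock, not_forall] at hq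
  obtain ⟨x, hx, hxm⟩ := hq
  rcases x with a | t | b
  · exact ⟨.inl a, hx⟩
  · exact (hxm ⟨t, rfl⟩).elim
  · exact ⟨.inr b, hx⟩

def threeRow (c : Fin k ⊕ Fin k → α) (m : Fin k → α) : T3 k → α :=
  Sum.elim (c ∘ .inl) (Sum.elim m (c ∘ .inr))

lemma threeRow_comp_embO (c : Fin k ⊕ Fin k → α) (m : Fin k → α) :
    threeRow c m ∘ embO k = c := by
  funext y
  rcases y with a | b <;> rfl

namespace IsGluing

variable {F : T3 k → α}

def blockLabel (hF : IsGluing d1 d2 F) : Quotient (stacked k d1 d2) → α :=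
  Quotient.lift F fun _ _ h => hF.stacked_le_ker h

lemma blockLabel_injOn_middle (hF : IsGluing d1 d2 F) {q q' : Quotient (stacked k d1 d2)}
    (hq : IsMiddleBlock d1 d2 q) (hq' : IsMiddleBlock d1 d2 q')
    (h : hF.blockLabel q = hF.blockLabel q') : q = q' := by
  induction q using Quotient.ind with | _ x => ?_
  induction q' using Quotient.ind with | _ x' => ?_
  obtain ⟨t', rfl⟩ := hq' x' rfl
  exact Quotient.sound (hF.stacked_of_eq_middle h)

lemma blockLabel_notMem_range (hF : IsGluing d1 d2 F) {c : Fin k ⊕ Fin k → α}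
    (hc : F ∘ embO k = c) {q : Quotient (stacked k d1 d2)} (hq : IsMiddleBlock d1 d2 q) :
    hF.blockLabel q ∉ Set.range c := by
  rintro ⟨y, hy⟩
  induction q using Quotient.ind with | _ x => ?_
  obtain ⟨t, rfl⟩ := hq x rfl
  have hrel := hF.stacked_of_eq_middle (x := embO k y) (hc ▸ hy)
  exact not_isMiddleBlock_mk_embO y ((Quotient.sound hrel).symm ▸ hq)

def middleLabels (hF : IsGluing d1 d2 F) {c : Fin k ⊕ Fin k → α} (hc : F ∘ embO k = c) :
    {q // IsMiddleBlock d1 d2 q} ↪ {v // v ∉ Set.range c} where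
  toFun q := ⟨hF.blockLabel q, hF.blockLabel_notMem_range hc q.2⟩
  inj' q q' h := Subtype.ext (hF.blockLabel_injOn_middle q.2 q'.2 (congrArg Subtype.val h))

end IsGluing

lemma eq_of_blockLabel_eq_on_middle {c : Fin k ⊕ Fin k → α} {m m' : Fin k → α}
    (hF : IsGluing d1 d2 (threeRow c m)) (hF' : IsGluing d1 d2 (threeRow c m'))
    (h : ∀ q, IsMiddleBlock d1 d2 q → hF.blockLabel q = hF'.blockLabel q) : m = m' := by
  funext t
  by_cases hq : IsMiddleBlock d1 d2 (Quotient.mk _ (.inr (.inl t)))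
  · exact h _ hq
  obtain ⟨y, hy⟩ := exists_mk_embO_of_not_isMiddleBlock hq
  have hval : ∀ {m}, IsGluing d1 d2 (threeRow c m) → m t = c y := fun hF =>
    (hF.stacked_le_ker (Quotient.exact hy)).symm.trans (congrFun (threeRow_comp_embO c _) y)
  exact (hval hF).trans (hval hF').symm

def fillLabel (c : Fin k ⊕ Fin k → α) (e : {q // IsMiddleBlock d1 d2 q} → α)
    (q : Quotient (stacked k d1 d2)) : α :=
  if h : IsMiddleBlock d1 d2 q then e ⟨q, h⟩ else c (exists_mk_embO_of_not_isMiddleBlock h).choose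

lemma fillLabel_mk_embO {c : Fin k ⊕ Fin k → α} (hc : compSetoid k d1 d2 ≤ Setoid.ker c)
    (e : {q // IsMiddleBlock d1 d2 q} → α) (y : Fin k ⊕ Fin k) :
    fillLabel c e (Quotient.mk _ (embO k y)) = c y := by
  have h := not_isMiddleBlock_mk_embO (d1 := d1) (d2 := d2) y
  rw [fillLabel, dif_neg h]
  exact hc (show (stacked k d1 d2).r _ _ from
    Quotient.exact (exists_mk_embO_of_not_isMiddleBlock h).choose_spec)

lemma threeRow_fillLabel {c : Fin k ⊕ Fin k → α} (hc : compSetoid k d1 d2 ≤ Setoid.ker c)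
    (e : {q // IsMiddleBlock d1 d2 q} → α) :
    threeRow c (fun t => fillLabel c e (Quotient.mk _ (.inr (.inl t)))) =
      fillLabel c e ∘ Quotient.mk _ := by
  funext x
  rcases x with a | t | b
  · exact (fillLabel_mk_embO hc e (.inl a)).symm
  · rfl
  · exact (fillLabel_mk_embO hc e (.inr b)).symm

lemma IsCoarsening.compSetoid_le {c : Fin k ⊕ Fin k → α}
    (hco : IsCoarsening k d1 d2 (Setoid.ker c)) : compSetoid k d1 d2 ≤ Setoid.ker c := by
  obtain ⟨P, -, -, -, hP⟩ := hco
  exact fun x y h => (hP x y).mpr (.inl h)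

lemma eq_or_memPair_of_fillLabel_eq {c : Fin k ⊕ Fin k → α}
    (hco : IsCoarsening k d1 d2 (Setoid.ker c))
    (g : {q // IsMiddleBlock d1 d2 q} ↪ {v // v ∉ Set.range c}) {q q' : Quotient (stacked k d1 d2)}
    (h : fillLabel c (fun q => g q) q = fillLabel c (fun q => g q) q') :
    q = q' ∨ ∃ pr : Quotient d1 × Quotient d2, (topOnly d1 pr.1 ∧ botOnly d2 pr.2) ∧
      ∃ u u', memPair d1 d2 u pr ∧ memPair d1 d2 u' pr ∧
        Quotient.mk _ (embO k u) = q ∧ Quotient.mk _ (embO k u') = q' := by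
  have hc := hco.compSetoid_le
  obtain ⟨P, hP1, -, -, hP4⟩ := hco
  by_cases hq : IsMiddleBlock d1 d2 q <;> by_cases hq' : IsMiddleBlock d1 d2 q'
  · simp only [fillLabel, dif_pos hq, dif_pos hq'] at h
    exact .inl (congrArg Subtype.val (g.injective (Subtype.ext h)))
  · simp only [fillLabel, dif_pos hq, dif_neg hq'] at h
    exact ((g ⟨q, hq⟩).2 ⟨_, h.symm⟩).elim
  · simp only [fillLabel, dif_neg hq, dif_pos hq'] at h
    exact ((g ⟨q', hq'⟩).2 ⟨_, h⟩).elim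
  obtain ⟨y, rfl⟩ := exists_mk_embO_of_not_isMiddleBlock hq
  obtain ⟨y', rfl⟩ := exists_mk_embO_of_not_isMiddleBlock hq'
  rw [fillLabel_mk_embO hc, fillLabel_mk_embO hc] at h
  rcases (hP4 y y').mp h with hcomp | ⟨pr, hpr, hy, hy'⟩
  · exact .inl (Quotient.sound hcomp)
  · exact .inr ⟨pr, hP1 pr hpr, y, y', hy, hy', rfl, rfl⟩

lemma isGluing_fillLabel (hm : rowMatch k d1 d2) {c : Fin k ⊕ Fin k → α}
    (hco : IsCoarsening k d1 d2 (Setoid.ker c))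
    (g : {q // IsMiddleBlock d1 d2 q} ↪ {v // v ∉ Set.range c}) :
    IsGluing d1 d2 (fillLabel c (fun q => g q) ∘ Quotient.mk _) := by
  refine ⟨Setoid.ext fun a b => ⟨fun h => ?_, fun h => ?_⟩,
    Setoid.ext fun a b => ⟨fun h => ?_, fun h => ?_⟩⟩
  · rcases eq_or_memPair_of_fillLabel_eq hco g h with he | ⟨pr, hpr, u, u', hu, hu', hq, hq'⟩
    · exact (comap_embT_stacked hm).le (show (stacked k d1 d2).r _ _ from Quotient.exact he)
    · exact Quotient.exact ((mk_eq_of_memPair_of_stacked_embT hm hpr hu (Quotient.exact hq)).trans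
        (mk_eq_of_memPair_of_stacked_embT hm hpr hu' (Quotient.exact hq')).symm)
  · exact congrArg (fillLabel c fun q => (g q : α)) (Quotient.sound (le_comap_embT_stacked h))
  · rcases eq_or_memPair_of_fillLabel_eq hco g h with he | ⟨pr, hpr, u, u', hu, hu', hq, hq'⟩
    · exact (comap_embB_stacked hm).le (show (stacked k d1 d2).r _ _ from Quotient.exact he)
    · exact Quotient.exact ((mk_eq_of_memPair_of_stacked_embB hm hpr hu (Quotient.exact hq)).trans
        (mk_eq_of_memPair_of_stacked_embB hm hpr hu' (Quotient.exact hq')).symm)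
  · exact congrArg (fillLabel c fun q => (g q : α)) (Quotient.sound (le_comap_embB_stacked h))

theorem card_isGluing_threeRow (hm : rowMatch k d1 d2) {c : Fin k ⊕ Fin k → α}
    (hco : IsCoarsening k d1 d2 (Setoid.ker c)) :
    Nat.card {m : Fin k → α // IsGluing d1 d2 (threeRow c m)} =
      Nat.card ({q // IsMiddleBlock d1 d2 q} ↪ {v // v ∉ Set.range c}) := by
  refine Nat.card_eq_of_bijective (fun m => m.2.middleLabels (threeRow_comp_embO c m.1))
    ⟨fun ⟨m, hF⟩ ⟨m', hF'⟩ h => Subtype.ext (eq_of_blockLabel_eq_on_middle hF hF' fun q hq =>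
      (congrArg Subtype.val (DFunLike.congr_fun h ⟨q, hq⟩) :)), fun g => ?_⟩
  have hfill := threeRow_fillLabel hco.compSetoid_le fun q => (g q : α)
  refine ⟨⟨_, hfill ▸ isGluing_fillLabel hm hco g⟩, DFunLike.ext _ _ fun ⟨q, hq⟩ => ?_⟩
  induction q using Quotient.ind with | _ x => ?_
  exact Subtype.ext ((congrFun hfill x).trans (dif_pos hq))

end Counting

section Operators

variable {n k : ℕ}

instance finite_setoid {β : Type*} [Finite β] : Finite (Setoid β) :=
  Finite.of_injective (fun s : Setoid β => s.r) fun _ _ h =>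
    Setoid.ext fun a b => iff_of_eq (congrFun (congrFun h a) b)

lemma kernelMap_apply (K : (Fin k → Fin n) → (Fin k → Fin n) → ℂ) (f : TP n k)
    (o : Fin k → Fin n) : kernelMap n k K f o = ∑ i, K o i * f i := rfl

lemma kernelMap_comp (K₁ K₂ : (Fin k → Fin n) → (Fin k → Fin n) → ℂ) :
    kernelMap n k K₂ ∘ₗ kernelMap n k K₁ = kernelMap n k fun o i => ∑ m, K₂ o m * K₁ m i := by
  refine LinearMap.ext fun f => funext fun o => ?_
  simp only [LinearMap.comp_apply, kernelMap_apply, Finset.mul_sum, Finset.sum_mul, mul_assoc]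
  exact Finset.sum_comm

lemma kernelMap_zero : kernelMap n k (fun _ _ => 0) = 0 :=
  LinearMap.ext fun f => funext fun o => by simp [kernelMap_apply]

lemma sum_smul_kernelMap {ι : Type*} (s : Finset ι) (a : ι → ℂ)
    (K : ι → (Fin k → Fin n) → (Fin k → Fin n) → ℂ) :
    ∑ d ∈ s, a d • kernelMap n k (K d) = kernelMap n k fun o i => ∑ d ∈ s, a d * K d o i := by
  refine LinearMap.ext fun f => funext fun o => ?_
  simp only [LinearMap.sum_apply, Finset.sum_apply, LinearMap.smul_apply, Pi.smul_apply,
    kernelMap_apply, smul_eq_mul, Finset.mul_sum, Finset.sum_mul, mul_assoc]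
  exact Finset.sum_comm

lemma coeX_eq_ite (d : SP k) (c : Fin k ⊕ Fin k → Fin n) :
    coeX n k d c = if d = Setoid.ker c then 1 else 0 :=
  if_congr ⟨fun h => Setoid.ext h, by rintro rfl _ _; exact Iff.rfl⟩ rfl rfl

lemma isGluing_threeRow_iff {d1 d2 : SP k} (i o m : Fin k → Fin n) :
    IsGluing d1 d2 (threeRow (Sum.elim i o) m) ↔
      d1 = Setoid.ker (Sum.elim i m) ∧ d2 = Setoid.ker (Sum.elim m o) := by
  have hT : threeRow (Sum.elim i o) m ∘ embT k = Sum.elim i m := by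
    funext x
    rcases x with a | a <;> rfl
  rw [IsGluing, hT, eq_comm, @eq_comm _ _ d2]
  rfl

lemma phiX_comp_phiX (d1 d2 : SP k) :
    phiX n k d2 ∘ₗ phiX n k d1 = kernelMap n k fun o i =>
      (Nat.card {m : Fin k → Fin n // IsGluing d1 d2 (threeRow (Sum.elim i o) m)} : ℂ) := by
  rw [phiX, phiX, kernelMap_comp]
  congr 1
  funext o i
  rw [Nat.card_eq_fintype_card, Fintype.card_subtype, Finset.natCast_card_filter]
  refine Finset.sum_congr rfl fun m _ => ?_
  simp only [coeX_eq_ite, isGluing_threeRow_iff, ite_zero_mul_ite_zero, mul_one, and_comm]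

lemma finsum_smul_phiX (p : SP k → Prop) (a : SP k → ℂ) :
    ∑ᶠ (d : SP k) (_ : p d), a d • phiX n k d = kernelMap n k fun o i =>
      if p (Setoid.ker (Sum.elim i o)) then a (Setoid.ker (Sum.elim i o)) else 0 := by
  have : Fintype (SP k) := Fintype.ofFinite _
  have hsum : ∑ᶠ (d : SP k) (_ : p d), a d • phiX n k d =
      ∑ d, (if p d then a d else 0) • phiX n k d := by
    rw [finsum_eq_sum_of_fintype]
    exact Finset.sum_congr rfl fun d _ => by rw [finsum_eq_if, ite_smul, zero_smul]
  rw [hsum]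
  simp only [phiX, sum_smul_kernelMap, coeX_eq_ite, mul_ite, mul_one, mul_zero,
    Finset.sum_ite_eq', Finset.mem_univ, if_true]

lemma fallingC_natCast (N b : ℕ) : fallingC (N : ℤ) b = (N.descFactorial b : ℤ) := by
  induction b with
  | zero => simp [fallingC]
  | succ b ih =>
    simp only [fallingC] at ih ⊢
    rw [Finset.prod_range_succ, ih, Nat.descFactorial_succ]
    rcases le_or_gt b N with h | h
    · push_cast [Nat.cast_sub h]
      ring
    · simp [Nat.descFactorial_eq_zero_iff_lt.mpr h]

lemma nBlocks_ker {α : Type*} (c : Fin k ⊕ Fin k → α) :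
    nBlocks (Setoid.ker c) = Nat.card (Set.range c) :=
  Nat.card_congr (Setoid.quotientKerEquivRange c)

lemma natCast_card_isGluing_threeRow {d1 d2 : SP k} (hm : rowMatch k d1 d2)
    (c : Fin k ⊕ Fin k → Fin n) :
    (Nat.card {m // IsGluing d1 d2 (threeRow c m)} : ℂ) =
      if IsCoarsening k d1 d2 (Setoid.ker c) then
        ((fallingC ((n : ℤ) - (nBlocks (Setoid.ker c) : ℤ)) (midCount k d1 d2) : ℤ) : ℂ)
      else 0 := by
  split_ifs with hco
  · have hle : nBlocks (Setoid.ker c) ≤ n :=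
      (nBlocks_ker c).trans_le ((Finite.card_subtype_le _).trans_eq (Nat.card_fin n))
    have : Fintype {q // IsMiddleBlock d1 d2 q} := Fintype.ofFinite _
    rw [card_isGluing_threeRow hm hco, ← Nat.cast_sub hle, fallingC_natCast, nBlocks_ker,
      Nat.card_eq_fintype_card, Fintype.card_embedding_eq, Fintype.card_subtype_compl,
      Fintype.card_fin, ← Nat.card_eq_fintype_card, ← Nat.card_eq_fintype_card]
    push_cast
    rfl
  · have : IsEmpty {m // IsGluing d1 d2 (threeRow c m)} :=
      ⟨fun m => hco (threeRow_comp_embO c m.1 ▸ m.2.isCoarsening_ker)⟩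
    simp

end Operators

theorem statement6_general (n k : ℕ) (d1 d2 : SP k) :
    (¬ rowMatch k d1 d2 → phiX n k d2 ∘ₗ phiX n k d1 = 0) ∧
    (rowMatch k d1 d2 →
      phiX n k d2 ∘ₗ phiX n k d1 =
        ∑ᶠ (d : SP k) (_ : IsCoarsening k d1 d2 d),
          ((fallingC ((n : ℤ) - (nBlocks d : ℤ)) (midCount k d1 d2) : ℤ) : ℂ) •
            phiX n k d) := by
  rw [phiX_comp_phiX]
  refine ⟨fun hnm => ?_, fun hm => ?_⟩
  · have (c : Fin k ⊕ Fin k → Fin n) : IsEmpty {m // IsGluing d1 d2 (threeRow c m)} :=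
      ⟨fun m => hnm m.2.rowMatch⟩
    simpa only [Nat.card_of_isEmpty, Nat.cast_zero] using kernelMap_zero
  · rw [finsum_smul_phiX]
    congr 1
    funext o i
    exact natCast_card_isGluing_threeRow hm _

/-- Structure constants of the partition algebra in the basis
`{x_d}` : if the bottom row of `d₁` does not match the top row of `d₂` the product
vanishes, while if it matches it equals the sum, over all coarsenings `d` of
`d₁ ∘ d₂` obtained by merging top-only blocks of `d₁` with bottom-only blocks of
`d₂` along an injective partial matching, of `(n - |d|)_{[d₁∘d₂]} • φ_k(x_d)`. -/
theorem statement6 (n k : ℕ) (hn : 0 < n) (hk : 0 < k) (d1 d2 : SP k) :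
    (¬ rowMatch k d1 d2 → phiX n k d2 ∘ₗ phiX n k d1 = 0) ∧
    (rowMatch k d1 d2 →
      phiX n k d2 ∘ₗ phiX n k d1 =
        ∑ᶠ (d : SP k) (_ : IsCoarsening k d1 d2 d),
          ((fallingC ((n : ℤ) - (nBlocks d : ℤ)) (midCount k d1 d2) : ℤ) : ℂ) •
            phiX n k d) :=
  statement6_general n k d1 d2

end Tanabe
end
end

section
/- Let r, p, n be positive integers with p dividing r. Let W be an irreducible finite-dimensional complex representation of G(r,1,n), and let U_1 and U_2 be G(r,p,n)-invariant subspaces of W that are irreducible as representations of G(r,p,n). Then U_1 and U_2 are isomorphic as representations of L(r,p,n). -/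
open scoped Classical
open Matrix

noncomputable section

namespace Tanabe

/-!
`G(r,p,n)` is normal in `G(r,1,n)`, and `G(r,1,n) = G(r,p,n)·⟨z⟩` for `z = diag(1,…,1,ζ)`,
because the product of the nonzero entries of an element of `G(r,1,n)` is a power of `ζ`.
Irreducibility of `W` forces `W = ∑_w z^w U₁`, a sum of irreducible `G(r,p,n)`-subrepresentations;
projecting equivariantly onto `U₂` (Maschke), `U₂` is `G(r,p,n)`-isomorphic to some `z^w U₁`.
Finally `z` commutes with `L(r,p,n)`, so `z^w : U₁ → z^w U₁` is an isomorphism of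
`L(r,p,n)`-representations.
-/

section Clifford

variable {V : Type*} [AddCommGroup V] [Module ℂ V]

namespace IsSubrepIso

variable {G : Type*} [Monoid G] {ρ : Representation ℂ G V} {U W X : Submodule ℂ V}

lemma trans (h₁ : IsSubrepIso ρ U W) (h₂ : IsSubrepIso ρ W X) : IsSubrepIso ρ U X := by
  obtain ⟨e₁, he₁⟩ := h₁
  obtain ⟨e₂, he₂⟩ := h₂
  refine ⟨e₁.trans e₂, fun g x hx hgx => ?_⟩
  have hgy : ρ g (e₁ ⟨x, hx⟩ : V) ∈ W := he₁ g x hx hgx ▸ (e₁ ⟨ρ g x, hgx⟩).2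
  have h₁ : e₁ ⟨ρ g x, hgx⟩ = ⟨ρ g (e₁ ⟨x, hx⟩), hgy⟩ := Subtype.ext (he₁ g x hx hgx)
  simp only [LinearEquiv.trans_apply, h₁]
  exact he₂ g _ _ hgy

lemma comp {G' : Type*} [Monoid G'] (h : IsSubrepIso ρ U W) (φ : G' →* G) :
    IsSubrepIso (ρ.comp φ) U W :=
  let ⟨e, he⟩ := h
  ⟨e, fun g => he (φ g)⟩

end IsSubrepIso

lemma isSubrepIso_of_disjoint_ker {G : Type*} [Monoid G] {ρ : Representation ℂ G V}
    {U W : Submodule ℂ V} (f : V →ₗ[ℂ] V) (hker : Disjoint U (LinearMap.ker f))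
    (hmap : U.map f = W) (hf : ∀ g x, f (ρ g x) = ρ g (f x)) : IsSubrepIso ρ U W := by
  have hinj : Function.Injective (f ∘ₗ U.subtype) := by
    rw [← LinearMap.ker_eq_bot, LinearMap.ker_comp, ← Submodule.disjoint_iff_comap_eq_bot]
    exact hker
  have hrange : LinearMap.range (f ∘ₗ U.subtype) = W := by
    rw [LinearMap.range_comp, Submodule.range_subtype, hmap]
  exact ⟨(LinearEquiv.ofInjective _ hinj).trans (LinearEquiv.ofEq _ _ hrange),
    fun g x _ _ => hf g x⟩

lemma RepInvariant.exists_isProj_commute {H : Type*} [Group H] [Finite H]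
    {σ : Representation ℂ H V} {U : Submodule ℂ V} (hU : RepInvariant σ U) :
    ∃ P : V →ₗ[ℂ] V, LinearMap.IsProj U P ∧ ∀ g, Commute P (σ g) := by
  have : NeZero (Nat.card H : ℂ) := ⟨Nat.cast_ne_zero.mpr Nat.card_pos.ne'⟩
  obtain ⟨C, hC⟩ := exists_isCompl (⟨U, fun g _ hv => hU g _ hv⟩ : Subrepresentation σ)
  have hUC : IsCompl U C.toSubmodule :=
    ⟨disjoint_iff.mpr congr(($(disjoint_iff.mp hC.1)).toSubmodule),
      codisjoint_iff.mpr congr(($(codisjoint_iff.mp hC.2)).toSubmodule)⟩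
  refine ⟨U.projection C.toSubmodule hUC,
    ⟨Submodule.projection_apply_mem hUC,
      fun _ hx => Submodule.projection_apply_of_mem_left hUC hx⟩, fun g => ?_⟩
  rw [LinearMap.IsIdempotentElem.commute_iff (Submodule.isIdempotentElem_projection hUC),
    Submodule.range_projection, Submodule.ker_projection, Module.End.mem_invtSubmodule,
    Module.End.mem_invtSubmodule]
  exact ⟨fun v hv => hU g v hv, fun v hv => C.apply_mem_toSubmodule g hv⟩

lemma exists_isSubrepIso_of_le_iSup {H : Type*} [Group H] [Finite H]
    {σ : Representation ℂ H V} {ι : Type*} {W : ι → Submodule ℂ V}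
    (hWinv : ∀ i, RepInvariant σ (W i)) (hWirr : ∀ i, SubIrreducible σ (W i))
    {U : Submodule ℂ V} (hUinv : RepInvariant σ U) (hUirr : SubIrreducible σ U)
    (hle : U ≤ ⨆ i, W i) : ∃ i, IsSubrepIso σ (W i) U := by
  obtain ⟨P, hPU, hPσ⟩ := hUinv.exists_isProj_commute
  have hPσ' : ∀ g x, P (σ g x) = σ g (P x) := fun g x => LinearMap.congr_fun (hPσ g) x
  have hmap_le : ∀ i, (W i).map P ≤ U := by
    rintro i _ ⟨x, -, rfl⟩
    exact hPU.map_mem x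
  have hmap_inv : ∀ i, RepInvariant σ ((W i).map P) := by
    rintro i g _ ⟨x, hx, rfl⟩
    exact ⟨σ g x, hWinv i g x hx, hPσ' g x⟩
  obtain ⟨i, hi⟩ : ∃ i, (W i).map P = U := by
    by_contra! hne
    have hbot : ∀ i, (W i).map P = ⊥ :=
      fun i => ((hUirr.2 _ (hmap_le i) (hmap_inv i)).resolve_right (hne i))
    apply hUirr.1
    rw [eq_bot_iff]
    calc U ≤ (⨆ i, W i).map P := fun u hu => ⟨u, hle hu, hPU.map_id u hu⟩
      _ = ⊥ := by simp [Submodule.map_iSup, hbot]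
  refine ⟨i, isSubrepIso_of_disjoint_ker P ?_ hi hPσ'⟩
  have hker_inv : RepInvariant σ (W i ⊓ LinearMap.ker P) := by
    rintro g x ⟨hx, hPx⟩
    refine ⟨hWinv i g x hx, ?_⟩
    change P (σ g x) = 0
    rw [hPσ', LinearMap.mem_ker.mp hPx, map_zero]
  rcases (hWirr i).2 _ inf_le_left hker_inv with hbot | htop
  · exact disjoint_iff.mpr hbot
  · refine absurd ?_ hUirr.1
    rw [← hi]
    exact LinearMap.le_ker_iff_map.mp (inf_eq_left.mp htop)

lemma map_map_rep_inv {K : Type*} [Group K] (ρ : Representation ℂ K V) (z : K)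
    (q : Submodule ℂ V) : (q.map (ρ z)).map (ρ z⁻¹) = q := by
  rw [← Submodule.map_comp, ← Module.End.mul_eq_comp, ← map_mul, inv_mul_cancel, map_one,
    Module.End.one_eq_id, Submodule.map_id]

section Translate

variable {G : Type*} [Group G] {H K : Subgroup G} (hHK : H ≤ K) (ρ : Representation ℂ K V)

lemma RepInvariant.map_of_mem_normalizer {U : Submodule ℂ V}
    (hU : RepInvariant (restrictRep hHK ρ) U) {z : K}
    (hz : (z : G) ∈ Subgroup.normalizer (H : Set G)) :
    RepInvariant (restrictRep hHK ρ) (U.map (ρ z)) := by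
  rintro h _ ⟨u, hu, rfl⟩
  have hmem : ((z⁻¹ * Subgroup.inclusion hHK h * z : K) : G) ∈ H := by
    simpa [mul_assoc] using (Subgroup.mem_normalizer_iff''.mp hz h).mp h.2
  refine ⟨restrictRep hHK ρ ⟨_, hmem⟩ u, hU _ u hu, ?_⟩
  change ρ z (ρ (z⁻¹ * Subgroup.inclusion hHK h * z) u) =
    ρ (Subgroup.inclusion hHK h) (ρ z u)
  rw [← Module.End.mul_apply, ← map_mul, ← Module.End.mul_apply, ← map_mul]
  group

lemma SubIrreducible.map_of_mem_normalizer {U : Submodule ℂ V}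
    (hU : SubIrreducible (restrictRep hHK ρ) U) {z : K}
    (hz : (z : G) ∈ Subgroup.normalizer (H : Set G)) :
    SubIrreducible (restrictRep hHK ρ) (U.map (ρ z)) := by
  have hz' : ((z⁻¹ : K) : G) ∈ Subgroup.normalizer (H : Set G) := inv_mem hz
  refine ⟨fun hbot => hU.1 ?_, fun q hq hqinv => ?_⟩
  · rw [← map_map_rep_inv ρ z U, hbot, Submodule.map_bot]
  · have hback : (q.map (ρ z⁻¹)).map (ρ z) = q := by
      simpa using map_map_rep_inv ρ z⁻¹ q
    have hle : q.map (ρ z⁻¹) ≤ U := by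
      simpa only [map_map_rep_inv] using Submodule.map_mono (f := ρ z⁻¹) hq
    rcases hU.2 _ hle (hqinv.map_of_mem_normalizer hHK ρ hz') with h | h
    · left; rw [← hback, h, Submodule.map_bot]
    · right; rw [← hback, h]

lemma iSup_map_zpow_eq_top (hirr : RepIrreducible ρ) {z : K}
    (hz : (z : G) ∈ Subgroup.normalizer (H : Set G))
    (hgen : ∀ g : K, ∃ w : ℤ, ((g * z ^ w : K) : G) ∈ H) {U : Submodule ℂ V}
    (hU : RepInvariant (restrictRep hHK ρ) U) (hU0 : U ≠ ⊥) :
    ⨆ w : ℤ, U.map (ρ (z ^ w)) = ⊤ := by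
  set M := ⨆ w : ℤ, U.map (ρ (z ^ w))
  have hzM : ∀ w : ℤ, M.map (ρ (z ^ w)) ≤ M := by
    intro w
    rw [Submodule.map_iSup]
    refine iSup_le fun i => ?_
    rw [← Submodule.map_comp, ← Module.End.mul_eq_comp, ← map_mul, ← _root_.zpow_add]
    exact le_iSup (fun i => U.map (ρ (z ^ i))) (w + i)
  have hHM : ∀ h : H, M.map (restrictRep hHK ρ h) ≤ M := by
    intro h
    rw [Submodule.map_iSup]
    refine iSup_mono fun i => ?_
    rintro _ ⟨v, hv, rfl⟩
    have hzi : ((z ^ i : K) : G) ∈ Subgroup.normalizer (H : Set G) := by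
      simpa using zpow_mem hz i
    exact hU.map_of_mem_normalizer hHK ρ hzi h v hv
  have hMinv : RepInvariant ρ M := by
    intro g v hv
    obtain ⟨w, hw⟩ := hgen g
    have hg : g = Subgroup.inclusion hHK ⟨_, hw⟩ * z ^ (-w) := by
      ext; simp
    rw [hg, map_mul, Module.End.mul_apply]
    exact hHM _ ⟨_, hzM _ ⟨v, hv, rfl⟩, rfl⟩
  refine (hirr.2 M hMinv).resolve_left fun hbot => hU0 ?_
  have h0 : U.map (ρ (z ^ (0 : ℤ))) = U := by
    rw [zpow_zero, map_one, Module.End.one_eq_id, Submodule.map_id]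
  rw [eq_bot_iff, ← hbot, ← h0]
  exact le_iSup (fun i => U.map (ρ (z ^ i))) 0

lemma isSubrepIso_map_of_forall_commute {L : Subgroup G} (hLK : L ≤ K) (U : Submodule ℂ V)
    {y : K} (hy : ∀ l ∈ L, Commute (y : G) l) :
    IsSubrepIso (restrictRep hLK ρ) U (U.map (ρ y)) := by
  refine isSubrepIso_of_disjoint_ker (ρ y) ?_ rfl fun l x => ?_
  · rw [LinearMap.ker_eq_bot.mpr (ρ.apply_bijective y).1]
    exact disjoint_bot_right
  · have hcomm : y * Subgroup.inclusion hLK l = Subgroup.inclusion hLK l * y :=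
      Subtype.ext (hy l l.2)
    change ρ y (ρ (Subgroup.inclusion hLK l) x) = ρ (Subgroup.inclusion hLK l) (ρ y x)
    rw [← Module.End.mul_apply, ← map_mul, hcomm, map_mul, Module.End.mul_apply]

theorem isSubrepIso_of_cyclic_extension {L : Subgroup G} (hLH : L ≤ H) [Finite H]
    (hirr : RepIrreducible ρ) {z : K} (hz : (z : G) ∈ Subgroup.normalizer (H : Set G))
    (hgen : ∀ g : K, ∃ w : ℤ, ((g * z ^ w : K) : G) ∈ H) (hzL : ∀ l ∈ L, Commute (z : G) l)
    {U₁ U₂ : Submodule ℂ V}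
    (hinv₁ : RepInvariant (restrictRep hHK ρ) U₁) (hinv₂ : RepInvariant (restrictRep hHK ρ) U₂)
    (hirr₁ : SubIrreducible (restrictRep hHK ρ) U₁)
    (hirr₂ : SubIrreducible (restrictRep hHK ρ) U₂) :
    IsSubrepIso (restrictRep (hLH.trans hHK) ρ) U₁ U₂ := by
  have hzw : ∀ w : ℤ, ((z ^ w : K) : G) ∈ Subgroup.normalizer (H : Set G) := fun w => by
    simpa using zpow_mem hz w
  obtain ⟨w, e⟩ := exists_isSubrepIso_of_le_iSup
    (fun w => hinv₁.map_of_mem_normalizer hHK ρ (hzw w))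
    (fun w => hirr₁.map_of_mem_normalizer hHK ρ (hzw w)) hinv₂ hirr₂
    (by rw [iSup_map_zpow_eq_top hHK ρ hirr hz hgen hinv₁ hirr₁.1]; exact le_top)
  have hzwL : ∀ l ∈ L, Commute ((z ^ w : K) : G) l := fun l hl => by
    simpa using (hzL l hl).zpow_left w
  exact (isSubrepIso_map_of_forall_commute ρ _ U₁ hzwL).trans
    (e.comp (Subgroup.inclusion hLH))

end Translate

end Clifford

section ComplexReflectionGroup

variable {r n : ℕ}

lemma mem_GGroup {p : ℕ} {hr : 0 < r} {g : GLn n} :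
    g ∈ GGroup r p n hr ↔ (g : Matrix (Fin n) (Fin n) ℂ) ∈ GSet r p n :=
  Iff.rfl

instance (r p n : ℕ) (hr : 0 < r) : Finite (GGroup r p n hr) := by
  let f : Equiv.Perm (Fin n) × (Fin n → Polynomial.nthRootsFinset r (1 : ℂ)) →
      Matrix (Fin n) (Fin n) ℂ := fun x => monoMat n x.1 fun i => x.2 i
  have hsub : GSet r p n ⊆ Set.range f := by
    rintro _ ⟨π, a, ha, -, rfl⟩
    exact ⟨(π, fun i => ⟨a i, (Polynomial.mem_nthRootsFinset hr 1).mpr (ha i)⟩), rfl⟩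
  have : Finite (GSet r p n) := ((Set.finite_range f).subset hsub).to_subtype
  exact Finite.of_injective
    (fun g : GGroup r p n hr => (⟨((g : GLn n) : Matrix (Fin n) (Fin n) ℂ), g.2⟩ : GSet r p n))
    fun g h hgh => Subtype.ext (Units.ext congr(($hgh).val))

lemma monoMat_conj (π σ : Equiv.Perm (Fin n)) (a b : Fin n → ℂ) :
    monoMat n π a * monoMat n σ b * monoMat n π⁻¹ (fun j => (a (π⁻¹ j))⁻¹) =
      monoMat n (π * σ * π⁻¹) (fun j => a (σ (π⁻¹ j)) * b (π⁻¹ j) * (a (π⁻¹ j))⁻¹) := by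
  simp [monoMat_mul]

lemma conj_mem_GGroup {p : ℕ} {hr : 0 < r} {g h : GLn n} (hg : g ∈ GGroup r 1 n hr)
    (hh : h ∈ GGroup r p n hr) : g * h * g⁻¹ ∈ GGroup r p n hr := by
  obtain ⟨π, a, ha, -, hga⟩ := hg
  obtain ⟨σ, b, hb, hpb, hhb⟩ := hh
  have ha0 : ∀ i, a i ≠ 0 := fun i => a_ne_zero hr (ha i)
  rw [mem_GGroup, Units.val_mul, Units.val_mul, gl_inv_val g π a ha0 hga, hga, hhb,
    monoMat_conj]
  refine ⟨_, _, fun j => by simp [mul_pow, ha, hb], ?_, rfl⟩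
  rw [Finset.prod_mul_distrib, Finset.prod_mul_distrib, Finset.prod_inv_distrib,
    Equiv.prod_comp π⁻¹ (fun j => a (σ j)), Equiv.prod_comp σ a, Equiv.prod_comp π⁻¹ b,
    Equiv.prod_comp π⁻¹ a, mul_right_comm,
    mul_inv_cancel₀ (Finset.prod_ne_zero_iff.mpr fun i _ => ha0 i), one_mul]
  exact hpb

lemma GGroup_le_normalizer (p : ℕ) (hr : 0 < r) :
    GGroup r 1 n hr ≤ Subgroup.normalizer (GGroup r p n hr : Set (GLn n)) := fun g hg =>
  Subgroup.mem_normalizer_iff.mpr fun h =>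
    ⟨conj_mem_GGroup hg, fun hc => by simpa [mul_assoc] using conj_mem_GGroup (inv_mem hg) hc⟩

lemma mulSingle_zeta_pow_pow_self (hr : 0 < r) (i j : Fin n) (k : ℕ) :
    (Pi.mulSingle i (zeta r ^ k) : Fin n → ℂ) j ^ r = 1 := by
  rcases eq_or_ne j i with rfl | hj
  · rw [Pi.mulSingle_eq_same, ← pow_mul, mul_comm, pow_mul, zeta_pow_self hr, one_pow]
  · rw [Pi.mulSingle_eq_of_ne hj, one_pow]

def diagLast (r n : ℕ) (hr : 0 < r) (hn : 0 < n) : GGroup r 1 n hr :=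
  ⟨monoUnit n 1 (Pi.mulSingle (lastIdx n hn) (zeta r)) fun j => by
      rcases eq_or_ne j (lastIdx n hn) with rfl | hj
      · simpa using zeta_ne_zero r
      · simp [hj],
    1, _, fun j => by simpa using mulSingle_zeta_pow_pow_self hr (lastIdx n hn) j 1,
    by simp [Finset.prod_pi_mulSingle', zeta_pow_self hr], rfl⟩

lemma diagLast_pow_val (hr : 0 < r) (hn : 0 < n) (k : ℕ) :
    (((diagLast r n hr hn ^ k : GGroup r 1 n hr) : GLn n) : Matrix (Fin n) (Fin n) ℂ) =
      monoMat n 1 (Pi.mulSingle (lastIdx n hn) (zeta r ^ k)) := by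
  have hdiag : ∀ d : Fin n → ℂ, monoMat n 1 d = Matrix.diagonal d := fun d => by
    ext i j
    by_cases h : i = j <;> simp [monoMat, h]
  rw [Subgroup.coe_pow, Units.val_pow_eq_pow_val]
  change monoMat n 1 (Pi.mulSingle (lastIdx n hn) (zeta r)) ^ k = _
  rw [hdiag, hdiag, Matrix.diagonal_pow, Pi.mulSingle_pow]

lemma exists_mul_diagLast_zpow_mem (p : ℕ) (hr : 0 < r) (hn : 0 < n) (g : GGroup r 1 n hr) :
    ∃ w : ℤ, ((g * diagLast r n hr hn ^ w : GGroup r 1 n hr) : GLn n) ∈ GGroup r p n hr := by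
  obtain ⟨π, a, ha, hpa, hga⟩ := g.2
  have ha0 : (∏ i, a i) ≠ 0 := Finset.prod_ne_zero_iff.mpr fun i _ => a_ne_zero hr (ha i)
  have hζ : IsPrimitiveRoot (zeta r) r := Complex.isPrimitiveRoot_exp r hr.ne'
  have := NeZero.of_pos hr
  obtain ⟨k, -, hk⟩ := hζ.eq_pow_of_pow_eq_one (ξ := (∏ i, a i)⁻¹)
    (by rw [inv_pow, ← Nat.div_one r, hpa, inv_one])
  refine ⟨k, ?_⟩
  rw [zpow_natCast, mem_GGroup, Subgroup.coe_mul, Units.val_mul, diagLast_pow_val, hga,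
    monoMat_mul]
  refine ⟨_, _, fun j => ?_, ?_, rfl⟩
  · simp only [Equiv.Perm.one_apply, mul_pow, ha, mulSingle_zeta_pow_pow_self hr, one_mul]
  · simp [Finset.prod_mul_distrib, Finset.prod_pi_mulSingle', hk, ha0]

lemma commute_diagLast (p : ℕ) (hr : 0 < r) (hn : 0 < n) :
    ∀ l ∈ LGroup r p n hr hn, Commute ((diagLast r n hr hn : GLn n)) l := by
  rintro l ⟨⟨π, a, -, -, hla⟩, hlast⟩
  rw [hla] at hlast
  obtain ⟨hπ, -⟩ := monoMat_last hn π a hlast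
  have hdπ : ∀ j, (Pi.mulSingle (lastIdx n hn) (zeta r) : Fin n → ℂ) (π j) =
      (Pi.mulSingle (lastIdx n hn) (zeta r) : Fin n → ℂ) j := fun j => by
    rcases eq_or_ne j (lastIdx n hn) with rfl | hj
    · rw [hπ]
    · rw [Pi.mulSingle_eq_of_ne hj,
        Pi.mulSingle_eq_of_ne fun h => hj (π.injective (h.trans hπ.symm))]
  refine Units.ext ?_
  change monoMat n 1 (Pi.mulSingle (lastIdx n hn) (zeta r)) * l =
    l * monoMat n 1 (Pi.mulSingle (lastIdx n hn) (zeta r))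
  rw [hla, monoMat_mul, monoMat_mul]
  simp [hdπ, mul_comm]

end ComplexReflectionGroup

theorem statement9_general (r p n : ℕ) (hr : 0 < r) (hn : 0 < n)
    (V : Type) [AddCommGroup V] [Module ℂ V]
    (ρ : Representation ℂ ↥(GGroup r 1 n hr) V) (hirr : RepIrreducible ρ)
    (U1 U2 : Submodule ℂ V)
    (hinv1 : RepInvariant (restrictRep (GGroup_le r p n hr) ρ) U1)
    (hinv2 : RepInvariant (restrictRep (GGroup_le r p n hr) ρ) U2)
    (hirr1 : SubIrreducible (restrictRep (GGroup_le r p n hr) ρ) U1)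
    (hirr2 : SubIrreducible (restrictRep (GGroup_le r p n hr) ρ) U2) :
    IsSubrepIso (restrictRep (LGroup_le_G1 r p n hr hn) ρ) U1 U2 :=
  isSubrepIso_of_cyclic_extension (GGroup_le r p n hr) ρ (LGroup_le_GGroup r p n hr hn) hirr
    (GGroup_le_normalizer p hr (diagLast r n hr hn).2) (exists_mul_diagLast_zpow_mem p hr hn)
    (commute_diagLast p hr hn) hinv1 hinv2 hirr1 hirr2

/-- If `W` is an irreducible finite-dimensional complex
representation of `G(r,1,n)` and `U₁, U₂` are `G(r,p,n)`-invariant subspaces which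
are irreducible as `G(r,p,n)`-representations, then `U₁ ≅ U₂` as representations of
`L(r,p,n)`. -/
theorem statement9 (r p n : ℕ) (hr : 0 < r) (hp : 0 < p) (hn : 0 < n) (hpr : p ∣ r)
    (V : Type) [AddCommGroup V] [Module ℂ V] [FiniteDimensional ℂ V]
    (ρ : Representation ℂ ↥(GGroup r 1 n hr) V) (hirr : RepIrreducible ρ)
    (U1 U2 : Submodule ℂ V)
    (hinv1 : RepInvariant (restrictRep (GGroup_le r p n hr) ρ) U1)
    (hinv2 : RepInvariant (restrictRep (GGroup_le r p n hr) ρ) U2)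
    (hirr1 : SubIrreducible (restrictRep (GGroup_le r p n hr) ρ) U1)
    (hirr2 : SubIrreducible (restrictRep (GGroup_le r p n hr) ρ) U2) :
    IsSubrepIso (restrictRep (LGroup_le_G1 r p n hr hn) ρ) U1 U2 :=
  statement9_general r p n hr hn V ρ hirr U1 U2 hinv1 hinv2 hirr1 hirr2

end Tanabe
end
end
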